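/- arXiv:1502.03049 — 6 statements merged into one kernel-verified Lean document; each statement's English description precedes it below -/
import Mathlib

section
/- Let A be an n×n random matrix with jointly independent entries taking values in {0,1}, with E A = (p_ij), and let d ≥ e be a number such that (1/n)·Σ_{i,j=1}^n p_ij ≤ d. Then for any r ≥ 1, with probability at least 1 − e^{−2rn}, one has ‖A − E A‖_{∞→1} ≤ 5·r·n·√d. -/
open MeasureTheory ProbabilityTheory

noncomputable def opNorm {m k : Type*} [Fintype m] [Fintype k] [DecidableEq k]
    (B : Matrix m k ℝ) : ℝ :=
  ‖(Matrix.toEuclideanLin B).toContinuousLinearMap‖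

noncomputable def normInfOne {m k : Type*} [Fintype m] [Fintype k] (B : Matrix m k ℝ) : ℝ :=
  ⨆ p : (m → ({-1, 1} : Set ℝ)) × (k → ({-1, 1} : Set ℝ)),
    ∑ i, ∑ j, (p.1 i : ℝ) * B i j * (p.2 j : ℝ)

def submatrixSet {n k : ℕ} (B : Matrix (Fin n) (Fin k) ℝ)
    (I : Finset (Fin n)) (J : Finset (Fin k)) : Matrix I J ℝ :=
  fun i j => B i.1 j.1

noncomputable def avgOp {n : ℕ} (B : Matrix (Fin n) (Fin n) ℝ) : Matrix (Fin n) (Fin n) ℝ :=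
  fun i j => B i j / (Real.sqrt (∑ l, B i l) * Real.sqrt (∑ l, B l j))

noncomputable def lap {n : ℕ} (B : Matrix (Fin n) (Fin n) ℝ) : Matrix (Fin n) (Fin n) ℝ :=
  fun i j => (if i = j ∧ 0 < ∑ l, B i l then (1 : ℝ) else 0) - avgOp B i j

def reg {n : ℕ} (B : Matrix (Fin n) (Fin n) ℝ) (τ : ℝ) : Matrix (Fin n) (Fin n) ℝ :=
  fun i j => B i j + τ

def maskMatrix {n : ℕ} (M : Matrix (Fin n) (Fin n) ℝ) (S : Finset (Fin n × Fin n)) :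
    Matrix (Fin n) (Fin n) ℝ :=
  fun i j => if (i, j) ∈ S then M i j else 0

open Classical in
noncomputable def secondSmallestEigenvalue {n : ℕ} (M : Matrix (Fin n) (Fin n) ℝ) : ℝ :=
  if hM : M.IsHermitian then
    (Multiset.sort (Finset.univ.val.map hM.eigenvalues) (· ≤ ·)).getD 1 0
  else 0

/-! For fixed sign vectors `x, y` the form `xᵀ (A - 𝔼A) y` is a sum of independent centred
Bernoulli variables with coefficients `±1`, and a Bernoulli variable `X` of mean `q` satisfies
`𝔼 exp (s (X - q)) ≤ exp (q s²)` for `|s| ≤ 1`. The Chernoff bound at `s = 1/√d` gives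
`ℙ (xᵀ (A - 𝔼A) y ≥ 5rn√d) ≤ exp (-5rn + ∑ p_ij / d) ≤ exp (-4rn)`, and a union bound
over the `4ⁿ ≤ e^{2n}` pairs of sign vectors leaves a failure probability of at most
`e^{-2rn}`. -/

open Real

namespace ProbabilityTheory

variable {Ω : Type*} {mΩ : MeasurableSpace Ω} {μ : Measure Ω} [IsProbabilityMeasure μ]
  {X : Ω → ℝ}

lemma integral_mem_Icc_of_zero_or_one (h01 : ∀ ω, X ω = 0 ∨ X ω = 1) :
    μ[X] ∈ Set.Icc 0 1 := by
  have hX : ∀ ω, X ω ∈ Set.Icc (0 : ℝ) 1 := fun ω => by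
    rcases h01 ω with h | h <;> simp [h]
  refine ⟨integral_nonneg fun ω => (hX ω).1, ?_⟩
  simpa using integral_mono_of_nonneg (ae_of_all _ fun ω => (hX ω).1)
    (integrable_const (μ := μ) (1 : ℝ)) (ae_of_all _ fun ω => (hX ω).2)

lemma mgf_sub_integral_le_of_zero_or_one (hX : Measurable X) (h01 : ∀ ω, X ω = 0 ∨ X ω = 1)
    {t : ℝ} (ht : |t| ≤ 1) :
    mgf (fun ω => X ω - μ[X]) μ t ≤ exp (μ[X] * t ^ 2) := by
  set q := μ[X]
  have hq : 0 ≤ q := (integral_mem_Icc_of_zero_or_one h01).1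
  have hXint : Integrable X μ :=
    .of_bound hX.aestronglyMeasurable 1
      (ae_of_all _ fun ω => by rcases h01 ω with h | h <;> simp [h])
  have hlin : ∀ ω, exp (t * (X ω - q)) = exp (-(t * q)) * (1 + (exp t - 1) * X ω) := by
    intro ω
    rw [show t * (X ω - q) = -(t * q) + t * X ω by ring, exp_add]
    rcases h01 ω with h | h <;> simp [h]
  calc mgf (fun ω => X ω - q) μ t = exp (-(t * q)) * (1 + (exp t - 1) * q) := by
        simp only [mgf, hlin]
        rw [integral_const_mul, integral_add (integrable_const 1) (hXint.const_mul _),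
          integral_const_mul]
        simp [q]
    _ ≤ exp (-(t * q)) * exp ((exp t - 1) * q) := by
        gcongr; linarith [add_one_le_exp ((exp t - 1) * q)]
    _ = exp ((exp t - 1 - t) * q) := by rw [← exp_add]; ring_nf
    _ ≤ exp (q * t ^ 2) := by
        rw [exp_le_exp]
        nlinarith [(abs_le.1 (abs_exp_sub_one_sub_id_le ht)).2]

variable {ι : Type*} [Fintype ι] {X : ι → Ω → ℝ} {c : ι → ℝ}

lemma mgf_sum_mul_sub_integral_le (hX : ∀ i, Measurable (X i))
    (h01 : ∀ i ω, X i ω = 0 ∨ X i ω = 1) (hind : iIndepFun X μ) (hc : ∀ i, |c i| ≤ 1)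
    {t : ℝ} (ht : |t| ≤ 1) :
    mgf (fun ω => ∑ i, c i * (X i ω - μ[X i])) μ t ≤ exp (t ^ 2 * ∑ i, μ[X i]) := by
  set Y : ι → Ω → ℝ := fun i ω => c i * (X i ω - μ[X i])
  have hYind : iIndepFun Y μ :=
    hind.comp (fun i v => c i * (v - ∫ ω, X i ω ∂μ)) (fun i => by fun_prop)
  have hYmeas : ∀ i, Measurable (Y i) := fun i => by have := hX i; fun_prop
  rw [show (fun ω => ∑ i, Y i ω) = ∑ i, Y i by ext; simp, hYind.mgf_sum hYmeas]
  calc ∏ i, mgf (Y i) μ t ≤ ∏ i, exp (μ[X i] * t ^ 2) := by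
        gcongr with i
        · exact fun i _ => mgf_nonneg
        have hct : |c i * t| ≤ 1 := by
          rw [abs_mul]; exact mul_le_one₀ (hc i) (abs_nonneg t) ht
        calc mgf (Y i) μ t ≤ exp (μ[X i] * (c i * t) ^ 2) := by
              rw [mgf_const_mul]; exact mgf_sub_integral_le_of_zero_or_one (hX i) (h01 i) hct
          _ ≤ exp (μ[X i] * t ^ 2) := by
              refine exp_le_exp.2 (mul_le_mul_of_nonneg_left ?_
                (integral_mem_Icc_of_zero_or_one (h01 i)).1)
              rw [mul_pow, ← sq_abs (c i)]
              exact mul_le_of_le_one_left (sq_nonneg t) (pow_le_one₀ (abs_nonneg _) (hc i))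
    _ = exp (t ^ 2 * ∑ i, μ[X i]) := by rw [← exp_sum, Finset.mul_sum]; simp_rw [mul_comm]

lemma measureReal_sum_mul_sub_integral_ge_le (hX : ∀ i, Measurable (X i))
    (h01 : ∀ i ω, X i ω = 0 ∨ X i ω = 1) (hind : iIndepFun X μ) (hc : ∀ i, |c i| ≤ 1)
    {t : ℝ} (ht0 : 0 ≤ t) (ht1 : t ≤ 1) (ε : ℝ) :
    μ.real {ω | ε ≤ ∑ i, c i * (X i ω - μ[X i])} ≤
      exp (-t * ε + t ^ 2 * ∑ i, μ[X i]) := by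
  have hterm : ∀ i ω, |c i * (X i ω - μ[X i])| ≤ 1 := by
    intro i ω
    have hq := integral_mem_Icc_of_zero_or_one (μ := μ) (h01 i)
    have hXω : X i ω ∈ Set.Icc (0 : ℝ) 1 := by rcases h01 i ω with h | h <;> simp [h]
    rw [abs_mul]
    exact mul_le_one₀ (hc i) (abs_nonneg _) (abs_sub_le_of_nonneg_of_le hXω.1 hXω.2 hq.1 hq.2)
  have hint : Integrable (fun ω => exp (t * ∑ i, c i * (X i ω - μ[X i]))) μ := by
    refine .of_bound (by have := hX; fun_prop) (exp (Fintype.card ι)) (ae_of_all _ fun ω => ?_)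
    rw [norm_of_nonneg (exp_nonneg _), exp_le_exp]
    calc t * ∑ i, c i * (X i ω - μ[X i]) ≤ |∑ i, c i * (X i ω - μ[X i])| := by
          rw [← one_mul |_|]
          exact (le_abs_self _).trans (by rw [abs_mul, abs_of_nonneg ht0]; gcongr)
      _ ≤ ∑ i, |c i * (X i ω - μ[X i])| := Finset.abs_sum_le_sum_abs _ _
      _ ≤ Fintype.card ι := by
          simpa using Finset.sum_le_sum fun i (_ : i ∈ Finset.univ) => hterm i ω
  calc _ ≤ exp (-t * ε) * mgf (fun ω => ∑ i, c i * (X i ω - μ[X i])) μ t :=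
        measure_ge_le_exp_mul_mgf ε ht0 hint
    _ ≤ exp (-t * ε) * exp (t ^ 2 * ∑ i, μ[X i]) := by
        gcongr
        exact mgf_sum_mul_sub_integral_le hX h01 hind hc (abs_le.2 ⟨by linarith, ht1⟩)
    _ = _ := (exp_add _ _).symm

end ProbabilityTheory

section SignPair

variable {m k : Type*} [Fintype m] [Fintype k]

abbrev SignPair (m k : Type*) := (m → ({-1, 1} : Set ℝ)) × (k → ({-1, 1} : Set ℝ))

def signForm (B : Matrix m k ℝ) (s : SignPair m k) : ℝ :=
  ∑ i, ∑ j, (s.1 i : ℝ) * B i j * (s.2 j : ℝ)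

lemma abs_coe_sign (a : ({-1, 1} : Set ℝ)) : |(a : ℝ)| = 1 := by
  rcases a with ⟨a, rfl | rfl⟩ <;> simp

lemma card_signPair [DecidableEq m] [DecidableEq k] :
    Fintype.card (SignPair m k) = 2 ^ (Fintype.card m + Fintype.card k) := by
  have h2 : Fintype.card ({-1, 1} : Set ℝ) = 2 := by
    rw [Set.card_insert _ (by norm_num), Set.card_singleton]
  simp [Fintype.card_prod, h2, pow_add]

lemma normInfOne_le_of_forall_signForm_le {B : Matrix m k ℝ} {t : ℝ}
    (h : ∀ s, signForm B s ≤ t) : normInfOne B ≤ t :=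
  have : Nonempty ({-1, 1} : Set ℝ) := ⟨⟨1, by simp⟩⟩
  ciSup_le h

end SignPair

lemma four_pow_mul_exp_le {r : ℝ} (hr : 1 ≤ r) (n : ℕ) :
    4 ^ n * exp (-4 * r * n) ≤ exp (-2 * r * n) := by
  have h4 : (4 : ℝ) ^ n ≤ exp (2 * r * n) := by
    calc (4 : ℝ) ^ n ≤ exp 2 ^ n := by
          gcongr
          linarith [quadratic_le_exp_of_nonneg (zero_le_two (α := ℝ))]
      _ = exp (2 * n) := by rw [← exp_nat_mul]; ring_nf
      _ ≤ exp (2 * r * n) := by gcongr; nlinarith [n.cast_nonneg (α := ℝ)]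
  calc 4 ^ n * exp (-4 * r * n) ≤ exp (2 * r * n) * exp (-4 * r * n) := by gcongr
    _ = exp (-2 * r * n) := by rw [← exp_add]; ring_nf

lemma one_sub_le_measure_compl {Ω : Type*} {mΩ : MeasurableSpace Ω} {μ : Measure Ω}
    [IsProbabilityMeasure μ] {s : Set Ω} {a : ENNReal} (h : μ s ≤ a) : 1 - a ≤ μ sᶜ :=
  tsub_le_iff_left.2 <|
    calc (1 : ENNReal) = μ Set.univ := measure_univ.symm
      _ ≤ μ s + μ sᶜ := measure_univ_le_add_compl s
      _ ≤ a + μ sᶜ := by gcongr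

section Concentration

variable {Ω : Type*} {mΩ : MeasurableSpace Ω} {μ : Measure Ω} [IsProbabilityMeasure μ]
  {m k : Type*} [Fintype m] [Fintype k]
  {A : Ω → Matrix m k ℝ} {p : Matrix m k ℝ}

lemma measureReal_signForm_sub_ge_le (hmeas : ∀ i j, Measurable fun ω => A ω i j)
    (h01 : ∀ ω i j, A ω i j = 0 ∨ A ω i j = 1)
    (hindep : iIndepFun (fun (q : m × k) ω => A ω q.1 q.2) μ)
    (hmean : ∀ i j, ∫ ω, A ω i j ∂μ = p i j) (s : SignPair m k)
    {t : ℝ} (ht0 : 0 ≤ t) (ht1 : t ≤ 1) (ε : ℝ) :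
    μ.real {ω | ε ≤ signForm (A ω - p) s} ≤
      exp (-t * ε + t ^ 2 * ∑ i, ∑ j, p i j) := by
  have hform : ∀ ω, signForm (A ω - p) s =
      ∑ q : m × k, (s.1 q.1 * s.2 q.2 : ℝ) * (A ω q.1 q.2 - ∫ ω, A ω q.1 q.2 ∂μ) := by
    intro ω
    simp only [signForm, Fintype.sum_prod_type, hmean, Matrix.sub_apply]
    exact Finset.sum_congr rfl fun i _ => Finset.sum_congr rfl fun j _ => by ring
  simp_rw [hform]
  have := measureReal_sum_mul_sub_integral_ge_le (μ := μ)
    (X := fun (q : m × k) ω => A ω q.1 q.2) (c := fun q => s.1 q.1 * s.2 q.2)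
    (fun q => hmeas q.1 q.2) (fun q ω => h01 ω q.1 q.2) hindep
    (fun q => by simp [abs_mul, abs_coe_sign]) ht0 ht1 ε
  simpa only [Fintype.sum_prod_type, hmean] using this

lemma measure_signForm_sub_ge_le (hmeas : ∀ i j, Measurable fun ω => A ω i j)
    (h01 : ∀ ω i j, A ω i j = 0 ∨ A ω i j = 1)
    (hindep : iIndepFun (fun (q : m × k) ω => A ω q.1 q.2) μ)
    (hmean : ∀ i j, ∫ ω, A ω i j ∂μ = p i j) (s : SignPair m k) {d r N : ℝ}
    (hd : 1 ≤ d) (hr : 1 ≤ r) (hN : 0 ≤ N) (hsum : ∑ i, ∑ j, p i j ≤ N * d) :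
    μ {ω | 5 * r * N * √d ≤ signForm (A ω - p) s} ≤ ENNReal.ofReal (exp (-4 * r * N)) := by
  have hsqrt : 1 ≤ √d := one_le_sqrt.2 hd
  have hexponent :
      -(√d)⁻¹ * (5 * r * N * √d) + (√d)⁻¹ ^ 2 * ∑ i, ∑ j, p i j ≤ -4 * r * N := by
    have hlin : (√d)⁻¹ * (5 * r * N * √d) = 5 * r * N := by field_simp
    have hquad : (√d)⁻¹ ^ 2 * ∑ i, ∑ j, p i j ≤ N := by
      rw [inv_pow, sq_sqrt (by linarith), inv_mul_le_iff₀ (by linarith)]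
      linarith
    nlinarith
  rw [← ofReal_measureReal]
  exact ENNReal.ofReal_le_ofReal <| (measureReal_signForm_sub_ge_le hmeas h01 hindep hmean s
    (inv_nonneg.2 (by linarith)) (inv_le_one_of_one_le₀ hsqrt) _).trans (exp_le_exp.2 hexponent)

lemma measure_iUnion_signForm_sub_ge_le {n : ℕ} {A : Ω → Matrix (Fin n) (Fin n) ℝ}
    {p : Matrix (Fin n) (Fin n) ℝ} (hmeas : ∀ i j, Measurable fun ω => A ω i j)
    (h01 : ∀ ω i j, A ω i j = 0 ∨ A ω i j = 1)
    (hindep : iIndepFun (fun (q : Fin n × Fin n) ω => A ω q.1 q.2) μ)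
    (hmean : ∀ i j, ∫ ω, A ω i j ∂μ = p i j) {d r : ℝ} (hd : 1 ≤ d) (hr : 1 ≤ r)
    (hsum : ∑ i, ∑ j, p i j ≤ n * d) :
    μ (⋃ s, {ω | 5 * r * n * √d ≤ signForm (A ω - p) s}) ≤
      ENNReal.ofReal (exp (-2 * r * n)) :=
  calc μ (⋃ s, {ω | 5 * r * n * √d ≤ signForm (A ω - p) s})
      ≤ ∑ s, μ {ω | 5 * r * n * √d ≤ signForm (A ω - p) s} :=
        measure_iUnion_fintype_le _ _
    _ ≤ ∑ _s : SignPair (Fin n) (Fin n), ENNReal.ofReal (exp (-4 * r * n)) :=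
        Finset.sum_le_sum fun s _ =>
          measure_signForm_sub_ge_le hmeas h01 hindep hmean s hd hr n.cast_nonneg hsum
    _ = ENNReal.ofReal (4 ^ n * exp (-4 * r * n)) := by
        rw [Finset.sum_const, Finset.card_univ, card_signPair, nsmul_eq_mul,
          ENNReal.ofReal_mul (by positivity)]
        norm_num [← two_mul, pow_mul]
    _ ≤ ENNReal.ofReal (exp (-2 * r * n)) := ENNReal.ofReal_le_ofReal (four_pow_mul_exp_le hr n)

end Concentration

/-- Concentration of adjacency matrices in the ℓ∞→ℓ1 norm (Lemma 4.1). -/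
theorem stmt3 (n : ℕ) (Ω : Type*) [MeasureSpace Ω] [IsProbabilityMeasure (ℙ : Measure Ω)]
    (A : Ω → Matrix (Fin n) (Fin n) ℝ) (p : Matrix (Fin n) (Fin n) ℝ) (d r : ℝ)
    (hmeas : ∀ i j, Measurable fun ω => A ω i j)
    (h01 : ∀ ω i j, A ω i j = 0 ∨ A ω i j = 1)
    (hindep : iIndepFun
      (fun (q : Fin n × Fin n) ω => A ω q.1 q.2) ℙ)
    (hmean : ∀ i j, (∫ ω, A ω i j) = p i j)
    (hd : Real.exp 1 ≤ d)
    (havg : (1 / (n : ℝ)) * ∑ i, ∑ j, p i j ≤ d)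
    (hr : 1 ≤ r) :
    ENNReal.ofReal (1 - Real.exp (-2 * r * n)) ≤
      ℙ {ω | normInfOne (A ω - p) ≤ 5 * r * n * Real.sqrt d} := by
  have hd1 : 1 ≤ d := le_trans (by linarith [add_one_le_exp (1 : ℝ)]) hd
  have hsum : ∑ i, ∑ j, p i j ≤ n * d := by
    rcases n.eq_zero_or_pos with rfl | hn
    · simp
    · rwa [one_div, inv_mul_le_iff₀ (by positivity)] at havg
  have hgood : (⋃ s, {ω | 5 * r * n * √d ≤ signForm (A ω - p) s})ᶜ ⊆
      {ω | normInfOne (A ω - p) ≤ 5 * r * n * √d} := fun ω hω =>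
    normInfOne_le_of_forall_signForm_le fun s =>
      (not_le.1 fun h => hω (Set.mem_iUnion.2 ⟨s, h⟩)).le
  calc ENNReal.ofReal (1 - exp (-2 * r * n)) = 1 - ENNReal.ofReal (exp (-2 * r * n)) := by
        rw [ENNReal.ofReal_sub _ (exp_pos _).le, ENNReal.ofReal_one]
    _ ≤ ℙ (⋃ s, {ω | 5 * r * n * √d ≤ signForm (A ω - p) s})ᶜ :=
        one_sub_le_measure_compl
          (measure_iUnion_signForm_sub_ge_le hmeas h01 hindep hmean hd1 hr hsum)
    _ ≤ _ := measure_mono hgood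
end

section
/- There is an absolute constant C > 0 such that the following holds. Let r ≥ 1, d ≥ e, and let A and Ā be n×n real matrices satisfying ‖A − Ā‖_{∞→1} ≤ 5·r·n·√d. Then there exists a subset J₁ ⊆ [n] with |J₁| ≥ n − 0.1·n such that ‖(A − Ā)_{J₁×J₁}‖ ≤ C·r·√d. -/
open MeasureTheory ProbabilityTheory

/-!
If unit vectors `x_s, y_s` (`s < t`) satisfy `x_sᵀ B y_s > M` and every coordinate `j` has total
mass `∑ s, (x_s j ^ 2 + y_s j ^ 2) < 3`, then Grothendieck's inequality applied to the vectors
`(x_s i / √3)_s` and `(y_s j / √3)_s` gives `t M ≤ 3 K_G ‖B‖_{∞→1}`. So choose such pairs greedily,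
supported on the coordinates whose mass is still below `1`: when `7320 ‖B‖_{∞→1} ≤ n M` the
process stops after `t ≤ n / 20` steps, at most `2 t ≤ n / 10` coordinates have become heavy, and
on the remaining light coordinates `J₁` no further pair exists, i.e. `‖B_{J₁×J₁}‖ ≤ M`.

Grothendieck's inequality (with `K_G = 122`) is proved by maximising `∑ B i j G (i, j)` over the
compact set of positive semidefinite `G` with diagonal at most `1`, realising the maximiser as the
covariance of Rademacher sums and truncating these at `√27`.
-/

open scoped BigOperators

namespace Grothendieck

section NormInfOne

variable {m k : Type*} [Fintype m] [Fintype k]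

lemma bddAbove_normInfOne_range (B : Matrix m k ℝ) :
    BddAbove (Set.range fun p : (m → ({-1, 1} : Set ℝ)) × (k → ({-1, 1} : Set ℝ)) =>
      ∑ i, ∑ j, (p.1 i : ℝ) * B i j * (p.2 j : ℝ)) := by
  have : Finite ({-1, 1} : Set ℝ) := Set.toFinite _
  exact (Set.finite_range _).bddAbove

noncomputable def signOf (c : ℝ) : ({-1, 1} : Set ℝ) :=
  if 0 ≤ c then ⟨1, by simp⟩ else ⟨-1, by simp⟩

lemma signOf_mul_self (c : ℝ) : (signOf c : ℝ) * c = |c| := by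
  unfold signOf; split_ifs with h
  · simp [abs_of_nonneg h]
  · simp [abs_of_neg (not_le.1 h)]

lemma mul_le_signOf_mul {a : ℝ} (ha : |a| ≤ 1) (c : ℝ) : a * c ≤ (signOf c : ℝ) * c := by
  rw [signOf_mul_self]
  calc a * c ≤ |a * c| := le_abs_self _
    _ = |a| * |c| := abs_mul _ _
    _ ≤ |c| := mul_le_of_le_one_left (abs_nonneg _) ha

lemma sum_mul_le_normInfOne (B : Matrix m k ℝ) {x : m → ℝ} {y : k → ℝ}
    (hx : ∀ i, |x i| ≤ 1) (hy : ∀ j, |y j| ≤ 1) :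
    ∑ i, ∑ j, x i * B i j * y j ≤ normInfOne B := by
  -- The form is affine in each coordinate: round `x`, then `y`, to signs.
  let s : m → ({-1, 1} : Set ℝ) := fun i => signOf (∑ j, B i j * y j)
  let t : k → ({-1, 1} : Set ℝ) := fun j => signOf (∑ i, (s i : ℝ) * B i j)
  calc ∑ i, ∑ j, x i * B i j * y j = ∑ i, x i * ∑ j, B i j * y j := by
        simp only [Finset.mul_sum, mul_assoc]
    _ ≤ ∑ i, (s i : ℝ) * ∑ j, B i j * y j :=
        Finset.sum_le_sum fun i _ => mul_le_signOf_mul (hx i) _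
    _ = ∑ j, (∑ i, (s i : ℝ) * B i j) * y j := by
        simp only [Finset.mul_sum, Finset.sum_mul, mul_assoc]; exact Finset.sum_comm
    _ ≤ ∑ j, (∑ i, (s i : ℝ) * B i j) * t j := by
        refine Finset.sum_le_sum fun j _ => ?_
        rw [mul_comm _ (y j), mul_comm _ (t j : ℝ)]
        exact mul_le_signOf_mul (hy j) _
    _ = ∑ i, ∑ j, (s i : ℝ) * B i j * t j := by
        simp only [Finset.sum_mul]; exact Finset.sum_comm
    _ ≤ normInfOne B := le_ciSup (bddAbove_normInfOne_range B) (s, t)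

lemma normInfOne_nonneg (B : Matrix m k ℝ) : 0 ≤ normInfOne B := by
  simpa using sum_mul_le_normInfOne B (x := 0) (y := 0) (by simp) (by simp)

lemma sum_mul_le_sq_mul_normInfOne (B : Matrix m k ℝ) {R : ℝ} (hR : 0 < R) {x : m → ℝ}
    {y : k → ℝ} (hx : ∀ i, |x i| ≤ R) (hy : ∀ j, |y j| ≤ R) :
    ∑ i, ∑ j, x i * B i j * y j ≤ R ^ 2 * normInfOne B := by
  have h := sum_mul_le_normInfOne B (x := fun i => x i / R) (y := fun j => y j / R)
    (fun i => by rw [abs_div, abs_of_pos hR, div_le_one hR]; exact hx i)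
    (fun j => by rw [abs_div, abs_of_pos hR, div_le_one hR]; exact hy j)
  have hscale : ∑ i, ∑ j, x i / R * B i j * (y j / R) = (∑ i, ∑ j, x i * B i j * y j) / R ^ 2 := by
    simp only [Finset.sum_div]
    refine Finset.sum_congr rfl fun i _ => Finset.sum_congr rfl fun j _ => ?_
    field_simp
  rw [hscale, div_le_iff₀ (by positivity)] at h
  linarith

end NormInfOne

section Rademacher

variable {ι : Type*} [DecidableEq ι]

def boolSign (b : Bool) : ℝ := if b then 1 else -1

lemma boolSign_sq (b : Bool) : boolSign b ^ 2 = 1 := by cases b <;> norm_num [boolSign]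

def flipAt (d : ι) (σ : ι → Bool) : ι → Bool := Function.update σ d (!σ d)

lemma flipAt_involutive (d : ι) : Function.Involutive (flipAt d) := by
  intro σ; simp [flipAt]

lemma expect_mul_boolSign_eq_zero [Fintype ι] (d : ι) {F : (ι → Bool) → ℝ}
    (hF : ∀ σ b, F (Function.update σ d b) = F σ) :
    𝔼 σ, F σ * boolSign (σ d) = 0 := by
  have hflip : 𝔼 σ, F σ * boolSign (σ d) = 𝔼 σ, -(F σ * boolSign (σ d)) :=
    Fintype.expect_equiv (flipAt_involutive d).toPerm _ _ fun σ => by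
      cases h : σ d <;> simp [flipAt, hF, h, boolSign]
  rw [Finset.expect_neg_distrib] at hflip
  linarith

def rademacherSum (s : Finset ι) (a : ι → ℝ) (σ : ι → Bool) : ℝ :=
  ∑ d ∈ s, a d * boolSign (σ d)

lemma rademacherSum_update {s : Finset ι} {d : ι} (hd : d ∉ s) (a : ι → ℝ) (σ : ι → Bool)
    (b : Bool) : rademacherSum s a (Function.update σ d b) = rademacherSum s a σ :=
  Finset.sum_congr rfl fun e he => by rw [Function.update_of_ne (ne_of_mem_of_not_mem he hd)]

lemma rademacherSum_insert {s : Finset ι} {d : ι} (hd : d ∉ s) (a : ι → ℝ) (σ : ι → Bool) :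
    rademacherSum (insert d s) a σ = a d * boolSign (σ d) + rademacherSum s a σ :=
  Finset.sum_insert hd

lemma expect_rademacherSum_mul [Fintype ι] (s : Finset ι) (a b : ι → ℝ) :
    𝔼 σ, rademacherSum s a σ * rademacherSum s b σ = ∑ d ∈ s, a d * b d := by
  induction s using Finset.induction_on with
  | empty => simp [rademacherSum]
  | @insert d s hd ih =>
    have hsplit : ∀ σ, rademacherSum (insert d s) a σ * rademacherSum (insert d s) b σ =
        a d * b d + (a d * rademacherSum s b σ + b d * rademacherSum s a σ) * boolSign (σ d)
          + rademacherSum s a σ * rademacherSum s b σ := by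
      intro σ
      rw [rademacherSum_insert hd, rademacherSum_insert hd]
      linear_combination a d * b d * boolSign_sq (σ d)
    simp only [hsplit, Finset.expect_add_distrib, Fintype.expect_const, ih,
      Finset.sum_insert hd]
    rw [expect_mul_boolSign_eq_zero d fun σ b => by simp only [rademacherSum_update hd]]
    ring

lemma expect_rademacherSum_pow_four_le [Fintype ι] (s : Finset ι) (a : ι → ℝ) :
    𝔼 σ, rademacherSum s a σ ^ 4 ≤ 3 * (∑ d ∈ s, a d ^ 2) ^ 2 := by
  induction s using Finset.induction_on with
  | empty => simp [rademacherSum]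
  | @insert d s hd ih =>
    have hsplit : ∀ σ, rademacherSum (insert d s) a σ ^ 4 =
        rademacherSum s a σ ^ 4 + 6 * a d ^ 2 * rademacherSum s a σ ^ 2 + a d ^ 4
          + (4 * a d ^ 3 * rademacherSum s a σ + 4 * a d * rademacherSum s a σ ^ 3)
            * boolSign (σ d) := by
      intro σ
      rw [rademacherSum_insert hd]
      set S := rademacherSum s a σ
      linear_combination (a d ^ 4 * (boolSign (σ d) ^ 2 + 1) + 4 * a d ^ 3 * S * boolSign (σ d)
        + 6 * a d ^ 2 * S ^ 2) * boolSign_sq (σ d)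
    have hsq : 𝔼 σ, rademacherSum s a σ ^ 2 = ∑ e ∈ s, a e ^ 2 := by
      simpa only [sq] using expect_rademacherSum_mul s a a
    have hodd := expect_mul_boolSign_eq_zero d (F := fun σ =>
      4 * a d ^ 3 * rademacherSum s a σ + 4 * a d * rademacherSum s a σ ^ 3)
      fun σ b => by simp only [rademacherSum_update hd]
    simp only [hsplit, Finset.expect_add_distrib, hodd, Fintype.expect_const, ← Finset.mul_expect,
      hsq, Finset.sum_insert hd]
    have h0 : 0 ≤ ∑ e ∈ s, a e ^ 2 := Finset.sum_nonneg fun e _ => sq_nonneg _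
    nlinarith [sq_nonneg (a d)]

end Rademacher

section GramBall

variable {ι : Type*} [Fintype ι]

open Matrix

/-- Positive semidefinite matrices with diagonal at most `1`: the Gram matrices of families
of vectors in the unit ball of a Euclidean space. -/
def gramBall (ι : Type*) [Fintype ι] : Set (Matrix ι ι ℝ) :=
  {G | G.PosSemidef ∧ ∀ a, G a a ≤ 1}

lemma _root_.Matrix.isClosed_setOf_posSemidef : IsClosed {G : Matrix ι ι ℝ | G.PosSemidef} := by
  simp only [posSemidef_iff_dotProduct_mulVec, Set.ofPred_and, Set.ofPred_forall]
  exact (isClosed_eq continuous_id.matrix_conjTranspose continuous_id).inter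
    (isClosed_iInter fun x => isClosed_le continuous_const
      (continuous_const.dotProduct (continuous_id.matrix_mulVec continuous_const)))

lemma _root_.Matrix.PosSemidef.two_mul_abs_apply_le [DecidableEq ι] {G : Matrix ι ι ℝ}
    (hG : G.PosSemidef) (a b : ι) : 2 * |G a b| ≤ G a a + G b b := by
  have hsymm : G b a = G a b := by simpa using hG.1.apply a b
  have hplus := hG.dotProduct_mulVec_nonneg (Pi.single a 1 + Pi.single b 1)
  have hminus := hG.dotProduct_mulVec_nonneg (Pi.single a 1 - Pi.single b 1)
  simp only [star_trivial, mulVec_add, mulVec_sub, dotProduct_add, dotProduct_sub, add_dotProduct,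
    sub_dotProduct, mulVec_single_one, single_one_dotProduct, col_apply, hsymm] at hplus hminus
  rcases abs_choice (G a b) with h | h <;> rw [h] <;> linarith

lemma abs_apply_le_one_of_mem_gramBall {G : Matrix ι ι ℝ} (hG : G ∈ gramBall ι) (a b : ι) :
    |G a b| ≤ 1 := by
  classical
  linarith [hG.1.two_mul_abs_apply_le a b, hG.2 a, hG.2 b]

lemma isCompact_gramBall : IsCompact (gramBall ι) := by
  have hbox : IsCompact (Set.univ.pi fun _ : ι => Set.univ.pi fun _ : ι => Set.Icc (-1 : ℝ) 1) :=
    isCompact_univ_pi fun _ => isCompact_univ_pi fun _ => isCompact_Icc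
  refine hbox.of_isClosed_subset ?_ fun G hG a _ b _ =>
    abs_le.1 (abs_apply_le_one_of_mem_gramBall hG a b)
  rw [gramBall, Set.ofPred_and, Set.ofPred_forall]
  exact Matrix.isClosed_setOf_posSemidef.inter
    (isClosed_iInter fun a => isClosed_le (continuous_id.matrix_elem a a) continuous_const)

lemma mul_transpose_mem_gramBall {κ : Type*} [Fintype κ] (V : Matrix ι κ ℝ)
    (hV : ∀ a, ∑ l, V a l ^ 2 ≤ 1) : V * Vᵀ ∈ gramBall ι :=
  ⟨by simpa using posSemidef_self_mul_conjTranspose V,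
    fun a => by simpa [mul_apply, sq] using hV a⟩

lemma expect_mul_mem_gramBall {Ω : Type*} [Fintype Ω] (T : ι → Ω → ℝ)
    (hT : ∀ a, 𝔼 ω, T a ω ^ 2 ≤ 1) : Matrix.of (fun a b => 𝔼 ω, T a ω * T b ω) ∈ gramBall ι := by
  refine ⟨?_, fun a => by simpa [sq] using hT a⟩
  have : Matrix.of (fun a b => 𝔼 ω, T a ω * T b ω) =
      (Fintype.card Ω : ℝ)⁻¹ • (Matrix.of T * (Matrix.of T)ᵀ) := by
    ext a b
    simp [Fintype.expect_eq_sum_div_card, mul_apply, div_eq_inv_mul]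
  have hpsd : (Matrix.of T * (Matrix.of T)ᵀ).PosSemidef := by
    simpa using posSemidef_self_mul_conjTranspose (Matrix.of T)
  rw [this]
  exact hpsd.smul (by positivity)

lemma exists_rademacher_of_mem_gramBall [DecidableEq ι] {G : Matrix ι ι ℝ}
    (hG : G ∈ gramBall ι) : ∃ Z : ι → (ι → Bool) → ℝ,
      (∀ a b, 𝔼 σ, Z a σ * Z b σ = G a b) ∧ ∀ a, 𝔼 σ, Z a σ ^ 4 ≤ 3 := by
  obtain ⟨U, rfl⟩ : ∃ U : Matrix ι ι ℝ, G = star U * U := by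
    open scoped MatrixOrder Matrix.Norms.L2Operator in
    exact CStarAlgebra.nonneg_iff_eq_star_mul_self.mp hG.1.nonneg
  have hcov : ∀ a b, 𝔼 σ, rademacherSum Finset.univ (fun c => U c a) σ *
      rademacherSum Finset.univ (fun c => U c b) σ = (star U * U) a b := fun a b => by
    rw [expect_rademacherSum_mul]; simp [mul_apply]
  refine ⟨fun a => rademacherSum Finset.univ (fun c => U c a), hcov, fun a => ?_⟩
  refine (expect_rademacherSum_pow_four_le _ _).trans ?_
  have hdiag : ∑ c, U c a ^ 2 = (star U * U) a a := by simp [mul_apply, sq]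
  have h0 : 0 ≤ (star U * U) a a := hG.1.diag_nonneg
  nlinarith [hG.2 a]

end GramBall

noncomputable def clamp (R t : ℝ) : ℝ := max (min t R) (-R)

lemma clamp_cases {R : ℝ} (hR : 0 ≤ R) (t : ℝ) :
    clamp R t = t ∨ (clamp R t = R ∧ R ≤ t) ∨ (clamp R t = -R ∧ t ≤ -R) := by
  unfold clamp
  rcases le_total t R with h₁ | h₁
  · rcases le_total (-R) t with h₂ | h₂
    · simp [min_eq_left h₁, max_eq_left h₂]
    · simp [min_eq_left h₁, h₂]
  · simp [max_eq_left (by linarith : -R ≤ R), h₁]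

lemma abs_clamp_le {R : ℝ} (hR : 0 ≤ R) (t : ℝ) : |clamp R t| ≤ R :=
  abs_le.2 ⟨le_max_right _ _, max_le (min_le_right _ _) (by linarith)⟩

lemma sq_clamp_le {R : ℝ} (hR : 0 ≤ R) (t : ℝ) : clamp R t ^ 2 ≤ t ^ 2 := by
  rcases clamp_cases hR t with h | ⟨h, ht⟩ | ⟨h, ht⟩ <;> rw [h] <;> nlinarith

lemma sq_sub_clamp_le {R : ℝ} (hR : 0 < R) (t : ℝ) : (t - clamp R t) ^ 2 ≤ t ^ 4 / R ^ 2 := by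
  rw [le_div_iff₀ (by positivity)]
  rcases clamp_cases hR.le t with h | ⟨h, ht⟩ | ⟨h, ht⟩ <;> rw [h]
  · simp; positivity
  · nlinarith [mul_nonneg hR.le (sub_nonneg.2 ht)]
  · nlinarith [mul_nonneg hR.le (by linarith : 0 ≤ -t - R)]

section Inequality

variable {m k : Type*} [Fintype m] [Fintype k]

def gramPairing (B : Matrix m k ℝ) (G : Matrix (m ⊕ k) (m ⊕ k) ℝ) : ℝ :=
  ∑ i, ∑ j, B i j * G (Sum.inl i) (Sum.inr j)

lemma continuous_gramPairing (B : Matrix m k ℝ) : Continuous (gramPairing B) :=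
  continuous_finsetSum _ fun _ _ => continuous_finsetSum _ fun _ _ =>
    continuous_const.mul (continuous_id.matrix_elem _ _)

noncomputable def correlation (B : Matrix m k ℝ) {Ω : Type*} [Fintype Ω] (X : m → Ω → ℝ)
    (Y : k → Ω → ℝ) : ℝ :=
  ∑ i, ∑ j, B i j * 𝔼 ω, X i ω * Y j ω

variable {Ω : Type*} [Fintype Ω]

lemma correlation_add_left (B : Matrix m k ℝ) (X X' : m → Ω → ℝ) (Y : k → Ω → ℝ) :
    correlation B (X + X') Y = correlation B X Y + correlation B X' Y := by
  simp only [correlation, Pi.add_apply, add_mul, Finset.expect_add_distrib, mul_add,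
    Finset.sum_add_distrib]

lemma correlation_add_right (B : Matrix m k ℝ) (X : m → Ω → ℝ) (Y Y' : k → Ω → ℝ) :
    correlation B X (Y + Y') = correlation B X Y + correlation B X Y' := by
  simp only [correlation, Pi.add_apply, mul_add, Finset.expect_add_distrib,
    Finset.sum_add_distrib]

lemma correlation_le_of_abs_le [Nonempty Ω] (B : Matrix m k ℝ) {R : ℝ} (hR : 0 < R)
    {X : m → Ω → ℝ} {Y : k → Ω → ℝ} (hX : ∀ i ω, |X i ω| ≤ R) (hY : ∀ j ω, |Y j ω| ≤ R) :
    correlation B X Y ≤ R ^ 2 * normInfOne B := by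
  have : correlation B X Y = 𝔼 ω, ∑ i, ∑ j, X i ω * B i j * Y j ω := by
    simp only [correlation, Finset.mul_expect, Finset.expect_sum_comm]
    exact Finset.sum_congr rfl fun i _ => Finset.sum_congr rfl fun j _ =>
      Finset.expect_congr rfl fun ω _ => by ring
  rw [this]
  exact Finset.expect_le Finset.univ_nonempty fun ω _ =>
    sum_mul_le_sq_mul_normInfOne B hR (fun i => hX i ω) (fun j => hY j ω)

lemma correlation_le_of_isMaxOn (B : Matrix m k ℝ) {G₀ : Matrix (m ⊕ k) (m ⊕ k) ℝ}
    (hG₀ : IsMaxOn (gramPairing B) (gramBall (m ⊕ k)) G₀) {α β : ℝ} (hα : 0 < α) (hβ : 0 < β)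
    {X : m → Ω → ℝ} {Y : k → Ω → ℝ} (hX : ∀ i, 𝔼 ω, X i ω ^ 2 ≤ α ^ 2)
    (hY : ∀ j, 𝔼 ω, Y j ω ^ 2 ≤ β ^ 2) :
    correlation B X Y ≤ α * β * gramPairing B G₀ := by
  let T : m ⊕ k → Ω → ℝ := Sum.elim (fun i ω => X i ω / α) (fun j ω => Y j ω / β)
  have hT : ∀ a, 𝔼 ω, T a ω ^ 2 ≤ 1 := by
    rintro (i | j)
    · simpa [T, div_pow, ← Finset.expect_div, div_le_one (pow_pos hα 2)] using hX i
    · simpa [T, div_pow, ← Finset.expect_div, div_le_one (pow_pos hβ 2)] using hY j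
  have hle := hG₀ (expect_mul_mem_gramBall T hT)
  have hscale : gramPairing B (Matrix.of fun a b => 𝔼 ω, T a ω * T b ω) =
      correlation B X Y / (α * β) := by
    simp only [gramPairing, correlation, Finset.sum_div, Matrix.of_apply, T, Sum.elim_inl,
      Sum.elim_inr, mul_div_assoc, Finset.expect_div]
    refine Finset.sum_congr rfl fun i _ => Finset.sum_congr rfl fun j _ => ?_
    congr 1
    exact Finset.expect_congr rfl fun ω _ => by field_simp
  rw [Set.mem_ofPred_eq, hscale, div_le_iff₀ (by positivity)] at hle
  linarith

/-- With Rademacher sums `Z` realising `G₀`, so that `V := gramPairing B G₀` is the correlation of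
`Z` with itself, split `Z` into its truncation at `√27` and a remainder whose second moment is at
most `1/9` by the fourth-moment bound. The truncated part contributes at most `27 ‖B‖_{∞→1}`, the
three cross terms at most `V/3 + V/3 + V/9` by maximality of `G₀`. -/
lemma gramPairing_le_of_isMaxOn (B : Matrix m k ℝ) {G₀ : Matrix (m ⊕ k) (m ⊕ k) ℝ}
    (hmem : G₀ ∈ gramBall (m ⊕ k)) (hmax : IsMaxOn (gramPairing B) (gramBall (m ⊕ k)) G₀) :
    gramPairing B G₀ ≤ 122 * normInfOne B := by
  classical
  obtain ⟨Z, hcov, hfourth⟩ := exists_rademacher_of_mem_gramBall hmem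
  set V := gramPairing B G₀
  set R := Real.sqrt 27
  have hR : 0 < R := by positivity
  have hR2 : R ^ 2 = 27 := Real.sq_sqrt (by norm_num)
  let Zb : m ⊕ k → ((m ⊕ k) → Bool) → ℝ := fun a σ => clamp R (Z a σ)
  let Zh : m ⊕ k → ((m ⊕ k) → Bool) → ℝ := fun a σ => Z a σ - clamp R (Z a σ)
  have hZb : ∀ a, 𝔼 σ, Zb a σ ^ 2 ≤ 1 ^ 2 := fun a => by
    calc 𝔼 σ, Zb a σ ^ 2 ≤ 𝔼 σ, Z a σ * Z a σ :=
          Finset.expect_le_expect fun σ _ => by simpa [sq] using sq_clamp_le hR.le (Z a σ)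
      _ ≤ 1 ^ 2 := by rw [hcov, one_pow]; exact hmem.2 a
  have hZh : ∀ a, 𝔼 σ, Zh a σ ^ 2 ≤ (1 / 3) ^ 2 := fun a => by
    calc 𝔼 σ, Zh a σ ^ 2 ≤ 𝔼 σ, Z a σ ^ 4 / 27 :=
          Finset.expect_le_expect fun σ _ => hR2 ▸ sq_sub_clamp_le hR (Z a σ)
      _ ≤ (1 / 3) ^ 2 := by rw [← Finset.expect_div]; linarith [hfourth a]
  have hsplit :
      V = correlation B (Zb ∘ Sum.inl + Zh ∘ Sum.inl) (Zb ∘ Sum.inr + Zh ∘ Sum.inr) := by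
    simp only [V, gramPairing, correlation, ← hcov]
    refine Finset.sum_congr rfl fun i _ => Finset.sum_congr rfl fun j _ => ?_
    simp [Zb, Zh]
  have hbb : correlation B (Zb ∘ Sum.inl) (Zb ∘ Sum.inr) ≤ 27 * normInfOne B :=
    hR2 ▸ correlation_le_of_abs_le B hR (fun _ _ => abs_clamp_le hR.le _)
      (fun _ _ => abs_clamp_le hR.le _)
  have hbh := correlation_le_of_isMaxOn B hmax one_pos (by norm_num : (0 : ℝ) < 1 / 3)
    (X := Zb ∘ Sum.inl) (Y := Zh ∘ Sum.inr) (fun _ => hZb _) (fun _ => hZh _)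
  have hhb := correlation_le_of_isMaxOn B hmax (by norm_num : (0 : ℝ) < 1 / 3) one_pos
    (X := Zh ∘ Sum.inl) (Y := Zb ∘ Sum.inr) (fun _ => hZh _) (fun _ => hZb _)
  have hhh := correlation_le_of_isMaxOn B hmax (by norm_num : (0 : ℝ) < 1 / 3)
    (by norm_num : (0 : ℝ) < 1 / 3) (X := Zh ∘ Sum.inl) (Y := Zh ∘ Sum.inr)
    (fun _ => hZh _) (fun _ => hZh _)
  rw [correlation_add_left, correlation_add_right, correlation_add_right] at hsplit
  linarith [normInfOne_nonneg B]

/-- Grothendieck's inequality. -/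
theorem sum_mul_sum_mul_le_normInfOne (B : Matrix m k ℝ) {κ : Type*} [Fintype κ]
    (p : m → κ → ℝ) (q : k → κ → ℝ) (hp : ∀ i, ∑ l, p i l ^ 2 ≤ 1)
    (hq : ∀ j, ∑ l, q j l ^ 2 ≤ 1) :
    ∑ i, ∑ j, B i j * ∑ l, p i l * q j l ≤ 122 * normInfOne B := by
  obtain ⟨G₀, hmem, hmax⟩ := isCompact_gramBall.exists_isMaxOn
    ⟨0, Matrix.PosSemidef.zero, by simp⟩ (continuous_gramPairing B).continuousOn
  let V : Matrix (m ⊕ k) κ ℝ := Matrix.of (Sum.elim p q)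
  have hV : V * V.transpose ∈ gramBall (m ⊕ k) :=
    mul_transpose_mem_gramBall V fun a => by cases a <;> simp [V, hp, hq]
  calc ∑ i, ∑ j, B i j * ∑ l, p i l * q j l = gramPairing B (V * V.transpose) := by
        simp [gramPairing, V, Matrix.mul_apply]
    _ ≤ gramPairing B G₀ := hmax hV
    _ ≤ 122 * normInfOne B := gramPairing_le_of_isMaxOn B hmem hmax

end Inequality

section Greedy

variable {ι : Type*}

def weight (x y : ℕ → ι → ℝ) (t : ℕ) (j : ι) : ℝ :=
  ∑ s ∈ Finset.range t, (x s j ^ 2 + y s j ^ 2)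

lemma weight_succ (x y : ℕ → ι → ℝ) (t : ℕ) (j : ι) :
    weight x y (t + 1) j = weight x y t j + (x t j ^ 2 + y t j ^ 2) :=
  Finset.sum_range_succ _ _

lemma weight_update_of_le (x y : ℕ → ι → ℝ) {s t : ℕ} (hs : s ≤ t) (u v : ι → ℝ) :
    weight (Function.update x t u) (Function.update y t v) s = weight x y s :=
  funext fun j => Finset.sum_congr rfl fun s' hs' => by
    have : s' ≠ t := by simp at hs'; omega
    simp [Function.update_of_ne this]

variable [Fintype ι]

structure IsNormWitness (B : Matrix ι ι ℝ) (M : ℝ) (J : Finset ι) (u v : ι → ℝ) : Prop where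
  sum_sq_left_le : ∑ i, u i ^ 2 ≤ 1
  sum_sq_right_le : ∑ i, v i ^ 2 ≤ 1
  left_eq_zero : ∀ j ∉ J, u j = 0
  right_eq_zero : ∀ j ∉ J, v j = 0
  lt_sum : M < ∑ i, ∑ j, u i * B i j * v j

noncomputable def lightSet (x y : ℕ → ι → ℝ) (t : ℕ) : Finset ι :=
  Finset.univ.filter fun j => weight x y t j < 1

def IsWitnessSeq (B : Matrix ι ι ℝ) (M : ℝ) (t : ℕ) (x y : ℕ → ι → ℝ) : Prop :=
  ∀ s < t, IsNormWitness B M (lightSet x y s) (x s) (y s)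

/-- A light coordinate gains at most `2` in one step and a heavy one gains nothing. -/
lemma weight_lt_three {B : Matrix ι ι ℝ} {M : ℝ} {t : ℕ} {x y : ℕ → ι → ℝ}
    (h : IsWitnessSeq B M t x y) {s : ℕ} (hs : s ≤ t) (j : ι) : weight x y s j < 3 := by
  induction s with
  | zero => simp [weight]
  | succ s ih =>
    have hw := h s hs
    rw [weight_succ]
    by_cases hj : j ∈ lightSet x y s
    · have hx : x s j ^ 2 ≤ 1 := (Finset.single_le_sum (fun i _ => sq_nonneg (x s i))
        (Finset.mem_univ j)).trans hw.sum_sq_left_le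
      have hy : y s j ^ 2 ≤ 1 := (Finset.single_le_sum (fun i _ => sq_nonneg (y s i))
        (Finset.mem_univ j)).trans hw.sum_sq_right_le
      have : weight x y s j < 1 := (Finset.mem_filter.1 hj).2
      linarith
    · rw [hw.left_eq_zero j hj, hw.right_eq_zero j hj]
      simpa using ih (by omega)

lemma mul_le_normInfOne_of_isWitnessSeq {B : Matrix ι ι ℝ} {M : ℝ} {t : ℕ} {x y : ℕ → ι → ℝ}
    (h : IsWitnessSeq B M t x y) : t * M ≤ 366 * normInfOne B := by
  set c := Real.sqrt 3
  have hc : c ^ 2 = 3 := Real.sq_sqrt (by norm_num)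
  have hc0 : 0 < c := by positivity
  have hsq : ∀ (z : ℕ → ι → ℝ) j, (∀ s, z s j ^ 2 ≤ x s j ^ 2 + y s j ^ 2) →
      ∑ s : Fin t, (z s j / c) ^ 2 ≤ 1 := fun z j hz => by
    simp only [div_pow, hc, ← Finset.sum_div, Fin.sum_univ_eq_sum_range (fun s => z s j ^ 2)]
    rw [div_le_one (by norm_num)]
    exact (Finset.sum_le_sum fun s _ => hz s).trans (weight_lt_three h le_rfl j).le
  have hG := sum_mul_sum_mul_le_normInfOne B (fun i (s : Fin t) => x s i / c)
    (fun j (s : Fin t) => y s j / c) (fun i => hsq x i fun s => by nlinarith [sq_nonneg (y s i)])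
    (fun j => hsq y j fun s => by nlinarith [sq_nonneg (x s j)])
  calc (t : ℝ) * M = ∑ s ∈ Finset.range t, M := by simp
    _ ≤ ∑ s ∈ Finset.range t, ∑ i, ∑ j, x s i * B i j * y s j :=
        Finset.sum_le_sum fun s hs => (h s (Finset.mem_range.1 hs)).lt_sum.le
    _ = 3 * ∑ i, ∑ j, B i j * ∑ s : Fin t, x s i / c * (y s j / c) := by
        rw [← Fin.sum_univ_eq_sum_range (fun s => ∑ i, ∑ j, x s i * B i j * y s j)]
        simp only [Finset.mul_sum]
        rw [Finset.sum_comm]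
        refine Finset.sum_congr rfl fun i _ => ?_
        rw [Finset.sum_comm]
        refine Finset.sum_congr rfl fun j _ => Finset.sum_congr rfl fun s _ => ?_
        field_simp
        rw [hc]
    _ ≤ 366 * normInfOne B := by linarith

lemma card_sub_le_card_lightSet {B : Matrix ι ι ℝ} {M : ℝ} {t : ℕ} {x y : ℕ → ι → ℝ}
    (h : IsWitnessSeq B M t x y) : (Fintype.card ι : ℝ) - 2 * t ≤ (lightSet x y t).card := by
  set heavy := Finset.univ.filter fun j => ¬ weight x y t j < 1
  have hcard : ((lightSet x y t).card : ℝ) + heavy.card = Fintype.card ι := by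
    exact_mod_cast Finset.card_filter_add_card_filter_not _
  have hheavy : ∀ j ∈ heavy, 1 ≤ weight x y t j := fun j hj => by
    simpa [heavy] using hj
  have : (heavy.card : ℝ) ≤ 2 * t := calc
    (heavy.card : ℝ) ≤ ∑ j ∈ heavy, weight x y t j := by
        simpa using Finset.card_nsmul_le_sum _ _ 1 hheavy
    _ ≤ ∑ j, weight x y t j :=
        Finset.sum_le_sum_of_subset_of_nonneg (Finset.subset_univ _)
          fun j _ _ => Finset.sum_nonneg fun s _ => by positivity
    _ = ∑ s ∈ Finset.range t, (∑ j, x s j ^ 2 + ∑ j, y s j ^ 2) := by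
        unfold weight; rw [Finset.sum_comm]; simp only [Finset.sum_add_distrib]
    _ ≤ ∑ s ∈ Finset.range t, (2 : ℝ) := Finset.sum_le_sum fun s hs => by
        have hw := h s (Finset.mem_range.1 hs)
        linarith [hw.sum_sq_left_le, hw.sum_sq_right_le]
    _ = 2 * t := by simp [mul_comm]
  linarith

lemma IsWitnessSeq.update {B : Matrix ι ι ℝ} {M : ℝ} {t : ℕ} {x y : ℕ → ι → ℝ}
    (h : IsWitnessSeq B M t x y) {u v : ι → ℝ} (huv : IsNormWitness B M (lightSet x y t) u v) :
    IsWitnessSeq B M (t + 1) (Function.update x t u) (Function.update y t v) := by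
  intro s hs
  rw [lightSet, weight_update_of_le x y (by omega : s ≤ t), ← lightSet]
  rcases Nat.lt_succ_iff_lt_or_eq.1 hs with hs | rfl
  · simpa [Function.update_of_ne hs.ne] using h s hs
  · simpa using huv

end Greedy

section OpNorm

variable {ι : Type*} [Fintype ι] [DecidableEq ι]

def extendByZero (J : Finset ι) (f : J → ℝ) (i : ι) : ℝ :=
  if h : i ∈ J then f ⟨i, h⟩ else 0

lemma sum_extendByZero (J : Finset ι) (f : J → ℝ) {g : ι → ℝ → ℝ} (hg : ∀ i, g i 0 = 0) :
    ∑ i, g i (extendByZero J f i) = ∑ i : J, g i (f i) := by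
  rw [← Finset.sum_subset (Finset.subset_univ J) fun i _ hi => by simp [extendByZero, hi, hg],
    ← Finset.sum_coe_sort J]
  exact Finset.sum_congr rfl fun i _ => by simp [extendByZero]

lemma exists_isNormWitness_of_lt_opNorm {n : ℕ} (B : Matrix (Fin n) (Fin n) ℝ)
    (J : Finset (Fin n)) {M : ℝ} (h : M < opNorm (submatrixSet B J J)) :
    ∃ u v, IsNormWitness B M J u v := by
  obtain ⟨v, hv, hMv⟩ := ContinuousLinearMap.exists_lt_apply_of_lt_opNorm _ h
  set w := (Matrix.toEuclideanLin (submatrixSet B J J)).toContinuousLinearMap v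
  have hw : ∀ i, w i = ∑ j : J, B i j * v j := fun i => rfl
  have hw2 : ∑ i : J, w i ^ 2 = ‖w‖ ^ 2 := (EuclideanSpace.real_norm_sq_eq w).symm
  refine ⟨extendByZero J fun i => ‖w‖⁻¹ * w i, extendByZero J fun j => v j, ⟨?_, ?_, ?_, ?_, ?_⟩⟩
  · rw [sum_extendByZero J _ (g := fun _ t => t ^ 2) fun _ => zero_pow two_ne_zero]
    calc ∑ i : J, (‖w‖⁻¹ * w i) ^ 2 = (‖w‖⁻¹ * ‖w‖) ^ 2 := by
          simp only [mul_pow, ← Finset.mul_sum, hw2]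
      _ ≤ 1 := by rcases eq_or_ne ‖w‖ 0 with h0 | h0 <;> simp [h0]
  · rw [sum_extendByZero J _ (g := fun _ t => t ^ 2) fun _ => zero_pow two_ne_zero,
      ← EuclideanSpace.real_norm_sq_eq]
    nlinarith [norm_nonneg v]
  · intro j hj; simp [extendByZero, hj]
  · intro j hj; simp [extendByZero, hj]
  · have hinner : ∀ i, ∑ j, B i j * extendByZero J (fun j => v j) j = ∑ j : J, B i j * v j :=
      fun i => sum_extendByZero J _ fun _ => mul_zero _
    simp only [mul_assoc, ← Finset.mul_sum, hinner]
    rw [sum_extendByZero J _ (g := fun i t => t * ∑ j : J, B i j * v j) fun _ => zero_mul _]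
    simp only [← hw, mul_assoc, ← Finset.mul_sum, ← sq, hw2]
    rcases eq_or_ne ‖w‖ 0 with h0 | h0
    · simpa [h0] using hMv
    · rwa [sq, ← mul_assoc, inv_mul_cancel₀ h0, one_mul]

end OpNorm

theorem exists_large_subset_opNorm_le {n : ℕ} (B : Matrix (Fin n) (Fin n) ℝ) {M : ℝ}
    (hM : 0 < M) (hB : 7320 * normInfOne B ≤ n * M) :
    ∃ J : Finset (Fin n), (n : ℝ) - n / 10 ≤ J.card ∧ opNorm (submatrixSet B J J) ≤ M := by
  -- Otherwise every witness sequence extends by one more pair, against the bound on its length.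
  by_contra! hfail
  have hlen : ∀ t x y, IsWitnessSeq B M t x y → (t : ℝ) ≤ n / 20 := fun t x y h => by
    have := mul_le_normInfOne_of_isWitnessSeq h
    rw [le_div_iff₀ (by norm_num)]
    nlinarith
  have hexists : ∀ t, ∃ x y, IsWitnessSeq B M t x y := by
    intro t
    induction t with
    | zero => exact ⟨0, 0, fun s hs => absurd hs (Nat.not_lt_zero s)⟩
    | succ t ih =>
      obtain ⟨x, y, h⟩ := ih
      have hcard := card_sub_le_card_lightSet h
      rw [Fintype.card_fin] at hcard
      obtain ⟨u, v, huv⟩ := exists_isNormWitness_of_lt_opNorm B _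
        (hfail (lightSet x y t) (by linarith [hlen t x y h]))
      exact ⟨_, _, h.update huv⟩
  obtain ⟨x, y, h⟩ := hexists (n + 1)
  have := hlen _ _ _ h
  push_cast at this
  linarith [(Nat.cast_nonneg n : (0 : ℝ) ≤ n)]

end Grothendieck

/-- First core block (Proposition 4.1). -/
theorem stmt4 :
    ∃ C : ℝ, 0 < C ∧
    ∀ (n : ℕ) (A Abar : Matrix (Fin n) (Fin n) ℝ) (d r : ℝ),
      1 ≤ r → Real.exp 1 ≤ d →
      normInfOne (A - Abar) ≤ 5 * r * n * Real.sqrt d →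
      ∃ J₁ : Finset (Fin n),
        (n : ℝ) - 0.1 * n ≤ (J₁.card : ℝ) ∧
        opNorm (submatrixSet (A - Abar) J₁ J₁) ≤ C * r * Real.sqrt d := by
  refine ⟨36600, by norm_num, fun n A Abar d r hr hd hB => ?_⟩
  have hd : 0 < Real.sqrt d := Real.sqrt_pos.2 ((Real.exp_pos 1).trans_le hd)
  have hM : 0 < 36600 * r * Real.sqrt d := mul_pos (by linarith) hd
  obtain ⟨J, hcard, hnorm⟩ := Grothendieck.exists_large_subset_opNorm_le (A - Abar) hM
    (by linarith)
  exact ⟨J, by linarith, hnorm⟩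
end

section
/- Let A be an n×n random matrix with jointly independent entries taking values in {0,1}, with E A = (p_ij), and let d ≥ e satisfy max_{i,j} n·p_ij ≤ d. Then for any r ≥ 1, with probability at least 1 − 2·n^{−2r}, the following holds simultaneously for all index sets: every subset I×J of [n]×[n] with |I| = m, |J| = k and min(m,k) ≤ n/d can be partitioned into two disjoint subsets ℛ and 𝒞 of [n]×[n] such that (i) for every i ∈ [n], |{j : (i,j) ∈ ℛ}| ≤ min(m,k), and for every j ∈ [n], |{i : (i,j) ∈ 𝒞}| ≤ min(m,k); and (ii) every row of the matrix A_ℛ has at most 10·r·log(d) entries equal to 1, and every column of the matrix A_𝒞 has at most 10·r·log(d) entries equal to 1. -/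
open MeasureTheory ProbabilityTheory

/-!
Put `B = 10 r log d`. Call a block `I × J` with `m = min (|I|, |J|) ≤ n / d` and
`k = max (|I|, |J|)` heavy if it carries more than `B k` ones. Off the event that some block is
heavy, every such `I × J` is peeled greedily: if `|J| ≤ |I|` the average row of the block carries
at most `B` ones, so one such row (of length `|J| = m`) goes into `ℛ`; otherwise a light column
goes into `𝒞`; then recurse on the smaller block.

A block with `m ≤ B` cannot be heavy. Otherwise the expected number of ones is at most
`M = m k d / n ≤ B k`, and the Chernoff bound `(e M / (B k)) ^ (B k)`, with `log B ≥ 2` and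
`m d ≤ n`, beats the number `C(n, |I|) C(n, |J|) ≤ (e n / m) ^ (2 k)` of blocks of that shape by a
factor `n ^ (-2 r - 2)`. Summing `1 / (C(n, |I|) C(n, |J|))` over all pairs `(I, J)` gives
`(n + 1) ^ 2 ≤ 2 n ^ 2`.
-/

open Real Finset Matrix
open scoped Nat

lemma Finset.card_filter_eq_one_le_sum {α : Type*} {s : Finset α} {f : α → ℝ}
    (hf : ∀ x ∈ s, 0 ≤ f x) : (#{x ∈ s | f x = 1} : ℝ) ≤ ∑ x ∈ s, f x := by
  calc (#{x ∈ s | f x = 1} : ℝ) = ∑ x ∈ s with f x = 1, f x := by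
        rw [sum_congr rfl fun x hx => (mem_filter.1 hx).2]
        simp
    _ ≤ ∑ x ∈ s, f x := sum_le_sum_of_subset_of_nonneg (filter_subset _ _) fun x hx _ => hf x hx

section RowColSplit

variable {ι κ : Type*} [DecidableEq ι] [DecidableEq κ]

/-- The partition `ℛ ∪ 𝒞` of the theorem, with the number of ones of a row of `ℛ` (column of `𝒞`)
replaced by the sum of `a` along it. -/
structure IsRowColSplit (a : Matrix ι κ ℝ) (B : ℝ) (cap : ℕ) (I : Finset ι) (J : Finset κ)
    (R C : Finset (ι × κ)) : Prop where
  disjoint : Disjoint R C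
  union_eq : R ∪ C = I ×ˢ J
  card_row_le (i : ι) : #{q ∈ R | q.1 = i} ≤ cap
  card_col_le (j : κ) : #{q ∈ C | q.2 = j} ≤ cap
  sum_row_le (i : ι) : ∑ q ∈ R with q.1 = i, a q.1 q.2 ≤ B
  sum_col_le (j : κ) : ∑ q ∈ C with q.2 = j, a q.1 q.2 ≤ B

namespace IsRowColSplit

variable {a : Matrix ι κ ℝ} {B : ℝ} {cap : ℕ} {I : Finset ι} {J : Finset κ}
  {R C : Finset (ι × κ)}

lemma of_product_eq_empty (hB : 0 ≤ B) (h : I ×ˢ J = ∅) : IsRowColSplit a B cap I J ∅ ∅ where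
  disjoint := disjoint_empty_left _
  union_eq := by rw [h, empty_union]
  card_row_le _ := by simp
  card_col_le _ := by simp
  sum_row_le _ := by simpa using hB
  sum_col_le _ := by simpa using hB

lemma transpose (h : IsRowColSplit a B cap I J R C) :
    IsRowColSplit aᵀ B cap J I (C.map ⟨Prod.swap, Prod.swap_injective⟩)
      (R.map ⟨Prod.swap, Prod.swap_injective⟩) where
  disjoint := by simpa using h.disjoint.symm
  union_eq := by
    rw [← map_union, union_comm, h.union_eq]
    exact map_swap_product J I
  card_row_le j := by simpa [filter_map, Function.comp_def] using h.card_col_le j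
  card_col_le i := by simpa [filter_map, Function.comp_def] using h.card_row_le i
  sum_row_le j := by simpa [filter_map, Function.comp_def] using h.sum_col_le j
  sum_col_le i := by simpa [filter_map, Function.comp_def] using h.sum_row_le i

lemma insert_row (h : IsRowColSplit a B cap I J R C) {i₀ : ι} (hi₀ : i₀ ∉ I) (hJ : #J ≤ cap)
    (hrow : ∑ j ∈ J, a i₀ j ≤ B) :
    IsRowColSplit a B cap (insert i₀ I) J (R ∪ {i₀} ×ˢ J) C := by
  have hfst : ∀ q ∈ R ∪ C, q.1 ≠ i₀ := fun q hq hq₀ =>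
    hi₀ (hq₀ ▸ (mem_product.1 (h.union_eq ▸ hq)).1)
  have hrow_filter (i : ι) : {q ∈ R ∪ {i₀} ×ˢ J | q.1 = i} =
      if i = i₀ then {i₀} ×ˢ J else {q ∈ R | q.1 = i} := by
    ext q
    have := hfst q
    split_ifs with hi <;> aesop
  refine ⟨?_, ?_, fun i => ?_, h.card_col_le, fun i => ?_, h.sum_col_le⟩
  · refine disjoint_union_left.2 ⟨h.disjoint, disjoint_left.2 fun q hq hqC => ?_⟩
    exact hfst q (mem_union_right R hqC) (mem_singleton.1 (mem_product.1 hq).1)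
  · rw [union_right_comm, h.union_eq, insert_eq, union_product, union_comm]
  · rw [hrow_filter]
    split_ifs
    · simpa using hJ
    · exact h.card_row_le i
  · rw [hrow_filter]
    split_ifs
    · simpa [sum_product] using hrow
    · exact h.sum_row_le i

lemma insert_col (h : IsRowColSplit a B cap I J R C) {j₀ : κ} (hj₀ : j₀ ∉ J) (hI : #I ≤ cap)
    (hcol : ∑ i ∈ I, a i j₀ ≤ B) :
    IsRowColSplit a B cap I (insert j₀ J) R (C ∪ I ×ˢ {j₀}) := by
  have := (h.transpose.insert_row hj₀ hI hcol).transpose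
  simp only [map_union, Finset.map_map, map_swap_product, transpose_transpose] at this
  convert this using 2 <;> ext <;> simp

lemma card_row_eq_one_le (h : IsRowColSplit a B cap I J R C) (ha : ∀ i j, 0 ≤ a i j) (i : ι) :
    (#{q ∈ R | q.1 = i ∧ a q.1 q.2 = 1} : ℝ) ≤ B := by
  rw [← filter_filter]
  exact (card_filter_eq_one_le_sum fun q _ => ha q.1 q.2).trans (h.sum_row_le i)

lemma card_col_eq_one_le (h : IsRowColSplit a B cap I J R C) (ha : ∀ i j, 0 ≤ a i j) (j : κ) :
    (#{q ∈ C | q.2 = j ∧ a q.1 q.2 = 1} : ℝ) ≤ B := by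
  rw [← filter_filter]
  exact (card_filter_eq_one_le_sum fun q _ => ha q.1 q.2).trans (h.sum_col_le j)

end IsRowColSplit

theorem exists_isRowColSplit (a : Matrix ι κ ℝ) {B : ℝ} (hB : 0 ≤ B) {cap : ℕ}
    (I : Finset ι) (J : Finset κ) (hcap : min #I #J ≤ cap)
    (hsum : ∀ I' ⊆ I, ∀ J' ⊆ J, ∑ i ∈ I', ∑ j ∈ J', a i j ≤ B * max (#I' : ℝ) #J') :
    ∃ R C, IsRowColSplit a B cap I J R C := by
  induction hN : #I + #J generalizing I J with
  | zero =>
    obtain ⟨hI, -⟩ := Nat.add_eq_zero_iff.1 hN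
    exact ⟨∅, ∅, .of_product_eq_empty hB (by simp [card_eq_zero.1 hI])⟩
  | succ N ih =>
    rcases I.eq_empty_or_nonempty with rfl | hI
    · exact ⟨∅, ∅, .of_product_eq_empty hB (empty_product J)⟩
    rcases J.eq_empty_or_nonempty with rfl | hJ
    · exact ⟨∅, ∅, .of_product_eq_empty hB (product_empty I)⟩
    have htotal := hsum I Subset.rfl J Subset.rfl
    rcases le_total #J #I with hJI | hIJ
    · obtain ⟨i₀, hi₀, hrow⟩ : ∃ i₀ ∈ I, ∑ j ∈ J, a i₀ j ≤ B := by
        refine exists_le_of_sum_le hI ?_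
        simpa [max_eq_left (Nat.cast_le.2 hJI), mul_comm] using htotal
      obtain ⟨R, C, h⟩ := ih (I.erase i₀) J
        (hcap.trans' (min_le_min_right _ (card_erase_le)))
        (fun I' hI' J' hJ' => hsum I' (hI'.trans (erase_subset _ _)) J' hJ')
        (by rw [card_erase_of_mem hi₀]; omega)
      have := h.insert_row (notMem_erase i₀ I) ((min_eq_right hJI).symm ▸ hcap) hrow
      exact ⟨_, _, insert_erase hi₀ ▸ this⟩
    · obtain ⟨j₀, hj₀, hcol⟩ : ∃ j₀ ∈ J, ∑ i ∈ I, a i j₀ ≤ B := by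
        refine exists_le_of_sum_le hJ ?_
        rw [sum_comm]
        simpa [max_eq_right (Nat.cast_le.2 hIJ), mul_comm] using htotal
      obtain ⟨R, C, h⟩ := ih I (J.erase j₀)
        (hcap.trans' (min_le_min_left _ (card_erase_le)))
        (fun I' hI' J' hJ' => hsum I' hI' J' (hJ'.trans (erase_subset _ _)))
        (by rw [card_erase_of_mem hj₀]; omega)
      have := h.insert_col (notMem_erase j₀ J) ((min_eq_left hIJ).symm ▸ hcap) hcol
      exact ⟨_, _, insert_erase hj₀ ▸ this⟩

end RowColSplit

section Chernoff

variable {Ω ι : Type*} {mΩ : MeasurableSpace Ω} {μ : Measure Ω} [IsProbabilityMeasure μ]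

lemma mgf_le_exp_of_zero_or_one {X : Ω → ℝ} (hX : AEMeasurable X μ)
    (h01 : ∀ ω, X ω = 0 ∨ X ω = 1) (t : ℝ) :
    mgf X μ t ≤ exp ((exp t - 1) * μ[X]) := by
  have hX_int : Integrable X μ :=
    .of_bound hX.aestronglyMeasurable 1
      (ae_of_all _ fun ω => by rcases h01 ω with h | h <;> simp [h])
  have hexp : (fun ω => exp (t * X ω)) = fun ω => 1 + (exp t - 1) * X ω := by
    funext ω
    rcases h01 ω with h | h <;> simp [h]
  rw [mgf, hexp, integral_add (integrable_const 1) (hX_int.const_mul _), integral_const_mul]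
  simpa [add_comm] using add_one_le_exp ((exp t - 1) * μ[X])

lemma measureReal_le_sum_le_exp_of_zero_or_one {X : ι → Ω → ℝ} (hX : ∀ i, Measurable (X i))
    (h01 : ∀ i ω, X i ω = 0 ∨ X i ω = 1) (hindep : iIndepFun X μ) (s : Finset ι) {M T : ℝ}
    (hM : 0 < M) (hMT : M ≤ T) (hmean : ∑ i ∈ s, μ[X i] ≤ M) :
    μ.real {ω | T ≤ ∑ i ∈ s, X i ω} ≤ exp (T * (1 + log M - log T)) := by
  set t := log (T / M)
  have ht : 0 ≤ t := log_nonneg ((one_le_div hM).2 hMT)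
  have hexp_t : exp t = T / M := exp_log (div_pos (hM.trans_le hMT) hM)
  have hle_one : ∀ i ω, X i ω ≤ 1 := fun i ω => by rcases h01 i ω with h | h <;> simp [h]
  have hint : Integrable (fun ω => exp (t * (∑ i ∈ s, X i) ω)) μ := by
    refine .of_bound (by fun_prop) (exp (t * #s)) (ae_of_all _ fun ω => ?_)
    rw [norm_of_nonneg (exp_pos _).le, exp_le_exp, Finset.sum_apply]
    gcongr
    simpa using sum_le_card_nsmul s (X · ω) 1 fun i _ => hle_one i ω
  have hmgf : mgf (∑ i ∈ s, X i) μ t ≤ exp ((exp t - 1) * M) := by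
    rw [hindep.mgf_sum hX]
    calc ∏ i ∈ s, mgf (X i) μ t ≤ ∏ i ∈ s, exp ((exp t - 1) * μ[X i]) :=
          prod_le_prod (fun _ _ => mgf_nonneg)
            fun i _ => mgf_le_exp_of_zero_or_one (hX i).aemeasurable (h01 i) t
      _ ≤ exp ((exp t - 1) * M) := by
          rw [← exp_sum, ← mul_sum]
          gcongr
          linarith [add_one_le_exp t]
  calc μ.real {ω | T ≤ ∑ i ∈ s, X i ω}
      = μ.real {ω | T ≤ (∑ i ∈ s, X i) ω} := by simp only [Finset.sum_apply]
    _ ≤ exp (-t * T) * mgf (∑ i ∈ s, X i) μ t := measure_ge_le_exp_mul_mgf T ht hint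
    _ ≤ exp (-t * T) * exp ((exp t - 1) * M) := by gcongr
    _ ≤ exp (T * (1 + log M - log T)) := by
        have hM_cancel : (T / M - 1) * M = T - M := by field_simp
        rw [← exp_add, exp_le_exp, hexp_t, hM_cancel,
          show t = log T - log M from log_div (hM.trans_le hMT).ne' hM.ne']
        nlinarith

end Chernoff

lemma Nat.choose_le_exp_one_mul_div_pow (n j : ℕ) : (n.choose j : ℝ) ≤ (exp 1 * n / j) ^ j := by
  rcases j.eq_zero_or_pos with rfl | hj
  · simp
  have hj' : (0 : ℝ) < j := by exact_mod_cast hj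
  calc (n.choose j : ℝ) ≤ n ^ j / j ! := Nat.choose_le_pow_div j n
    _ = (n / j) ^ j * ((j : ℝ) ^ j / j !) := by rw [div_pow]; field_simp
    _ ≤ (n / j) ^ j * exp 1 ^ j := by
        gcongr
        rw [← exp_nat_mul, mul_one]
        exact pow_div_factorial_le_exp _ hj'.le j
    _ = (exp 1 * n / j) ^ j := by rw [← mul_pow]; ring

lemma Nat.choose_le_exp_one_mul_div_pow_of_le {n m j k : ℕ} (hm : 0 < m) (hmj : m ≤ j)
    (hjk : j ≤ k) (hjn : j ≤ n) : (n.choose j : ℝ) ≤ (exp 1 * n / m) ^ k := by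
  have hm' : (0 : ℝ) < m := by exact_mod_cast hm
  have hmn : (m : ℝ) ≤ n := by exact_mod_cast hmj.trans hjn
  have hbase : 1 ≤ exp 1 * n / m := by
    rw [le_div_iff₀ hm']
    nlinarith [add_one_le_exp (1 : ℝ)]
  calc (n.choose j : ℝ) ≤ (exp 1 * n / j) ^ j := n.choose_le_exp_one_mul_div_pow j
    _ ≤ (exp 1 * n / m) ^ j := by gcongr
    _ ≤ (exp 1 * n / m) ^ k := pow_le_pow_right₀ hbase hjk

lemma sum_inv_choose_card (α : Type*) [Fintype α] :
    ∑ s : Finset α, ((Fintype.card α).choose #s : ℝ)⁻¹ = Fintype.card α + 1 := by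
  calc ∑ s : Finset α, ((Fintype.card α).choose #s : ℝ)⁻¹
      = ∑ j ∈ range (Fintype.card α + 1),
          (Fintype.card α).choose j • ((Fintype.card α).choose j : ℝ)⁻¹ := by
        rw [← powerset_univ,
          sum_powerset_apply_card (fun j => ((Fintype.card α).choose j : ℝ)⁻¹), card_univ]
    _ = ∑ _j ∈ range (Fintype.card α + 1), (1 : ℝ) := sum_congr rfl fun j hj => by
        have := Nat.choose_pos (Nat.lt_succ_iff.1 (mem_range.1 hj))
        rw [nsmul_eq_mul, mul_inv_cancel₀ (by positivity)]
    _ = Fintype.card α + 1 := by simp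

/-- `w = log m`, `u = log d`, `L = log n` and `c = log (10 r u)` in the exponent of
`exp_tail_mul_count_le`. -/
lemma exponent_le {r u w L k c : ℝ} (hr : 1 ≤ r) (hu : 1 ≤ u) (hk : 4 ≤ k) (hwk : w ≤ k)
    (hL : w + u ≤ L) (hc : 2 ≤ c) :
    10 * r * u * k * (1 + w + u - L - c) + 2 * (k * (1 + L - w)) ≤ -((2 * r + 2) * L) := by
  obtain ⟨v, hv, rfl⟩ : ∃ v, 0 ≤ v ∧ L = w + u + v := ⟨L - w - u, by linarith, by ring⟩
  have hr0 : 0 ≤ r := by linarith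
  have hk0 : 0 ≤ k := by linarith
  have hru : 1 ≤ r * u := by nlinarith
  have huk : 4 ≤ u * k := by nlinarith
  nlinarith [mul_nonneg (sub_nonneg.2 hr) hk0, mul_nonneg (sub_nonneg.2 hru) hk0,
    mul_nonneg (mul_nonneg (sub_nonneg.2 hru) hk0) hv,
    mul_nonneg (mul_nonneg (by linarith : (0 : ℝ) ≤ r * u) hk0) (sub_nonneg.2 hc),
    mul_nonneg hr0 (sub_nonneg.2 hwk), mul_nonneg hr0 (sub_nonneg.2 hu),
    mul_nonneg (by linarith : (0 : ℝ) ≤ r * u) (by linarith : (0 : ℝ) ≤ k - 4),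
    mul_nonneg (mul_nonneg hr0 hv) (sub_nonneg.2 huk)]

/-- The Chernoff bound `(e M / T) ^ T` for `T = 10 r log d · k` and `M = m k d / n`, times the
bound `(e n / m) ^ (2 k)` on the number of `m × k` blocks. -/
lemma exp_tail_mul_count_le {n m k : ℕ} {r d : ℝ} (hr : 1 ≤ r) (hd : exp 1 ≤ d)
    (hm : 10 * r * log d < m) (hmk : m ≤ k) (hmd : m * d ≤ n) :
    exp (10 * r * log d * k * (1 + log (m * k * d / n) - log (10 * r * log d * k))) *
      (exp 1 * n / m) ^ (2 * k) ≤ (n : ℝ) ^ (-(2 * r + 2)) := by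
  set B := 10 * r * log d
  have hd0 : 0 < d := (exp_pos 1).trans_le hd
  have hu : 1 ≤ log d := (le_log_iff_exp_le hd0).2 hd
  have hB : 10 ≤ B := by nlinarith
  have hmk' : (m : ℝ) ≤ k := by exact_mod_cast hmk
  have hm0 : (0 : ℝ) < m := by linarith
  have hk0 : (0 : ℝ) < k := by linarith
  have hn : (0 : ℝ) < n := by nlinarith
  have hlogB : 2 ≤ log B := by
    refine (le_log_iff_exp_le (by linarith)).2 ?_
    rw [show (2 : ℝ) = 1 + 1 by norm_num, exp_add]
    nlinarith [exp_one_lt_d9, exp_pos 1]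
  have hlogm : log m ≤ k := by linarith [log_le_sub_one_of_pos hm0]
  have hmdn : log m + log d ≤ log n := by
    rw [← log_mul hm0.ne' hd0.ne']
    exact log_le_log (by positivity) hmd
  have hlog : log (m * k * d / n) - log (B * k) = log m + log d - log n - log B := by
    rw [log_div (by positivity) hn.ne', log_mul (by positivity) hd0.ne',
      log_mul hm0.ne' hk0.ne', log_mul (by positivity) hk0.ne']
    ring
  have hcount : (exp 1 * n / m) ^ (2 * k) = exp (2 * (k * (1 + log n - log m))) := by
    rw [← exp_log (by positivity : 0 < exp 1 * n / m), ← exp_nat_mul, log_div (by positivity)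
      hm0.ne', log_mul (exp_pos 1).ne' hn.ne', log_exp]
    push_cast
    rw [mul_assoc]
  rw [hcount, ← exp_add, rpow_def_of_pos hn, exp_le_exp, add_sub_assoc, hlog]
  linarith [exponent_le hr hu (by linarith) hlogm hmdn hlogB]

lemma rpow_neg_add_two_le {x : ℝ} (hx : 3 ≤ x) (s : ℝ) :
    x ^ (-(s + 2)) ≤ 2 * x ^ (-s) / (x + 1) ^ 2 := by
  have hx0 : 0 < x := by linarith
  rw [show -(s + 2) = -s - 2 by ring, rpow_sub hx0, rpow_two,
    div_le_div_iff₀ (by positivity) (by positivity)]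
  have := rpow_pos_of_pos hx0 (-s)
  nlinarith [mul_le_mul_of_nonneg_left (by nlinarith : (x + 1) ^ 2 ≤ 2 * x ^ 2) this.le]

section RandomMatrix

variable {Ω : Type*} {mΩ : MeasurableSpace Ω} {μ : Measure Ω} [IsProbabilityMeasure μ] {n : ℕ}
  {A : Ω → Matrix (Fin n) (Fin n) ℝ} {d : ℝ}

lemma measureReal_le_blockSum_le_exp (hmeas : ∀ i j, Measurable fun ω => A ω i j)
    (h01 : ∀ ω i j, A ω i j = 0 ∨ A ω i j = 1)
    (hindep : iIndepFun (fun (q : Fin n × Fin n) ω => A ω q.1 q.2) μ)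
    (hmax : ∀ i j, n * μ[fun ω => A ω i j] ≤ d) (I J : Finset (Fin n)) {T : ℝ}
    (hM : 0 < #I * #J * d / n) (hMT : #I * #J * d / n ≤ T) :
    μ.real {ω | T ≤ ∑ i ∈ I, ∑ j ∈ J, A ω i j} ≤
      exp (T * (1 + log (#I * #J * d / n) - log T)) := by
  have hn : (0 : ℝ) < n := by
    by_contra h
    simp_all [le_antisymm (not_lt.1 h) n.cast_nonneg]
  have hmean : ∑ q ∈ I ×ˢ J, μ[fun ω => A ω q.1 q.2] ≤ #I * #J * d / n := by
    calc ∑ q ∈ I ×ˢ J, μ[fun ω => A ω q.1 q.2] ≤ ∑ q ∈ I ×ˢ J, d / n :=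
          sum_le_sum fun q _ => by rw [le_div_iff₀ hn, mul_comm]; exact hmax q.1 q.2
      _ = #I * #J * d / n := by simp [mul_div_assoc]
  simpa [sum_product] using measureReal_le_sum_le_exp_of_zero_or_one
    (X := fun q ω => A ω q.1 q.2) (fun q => hmeas q.1 q.2) (fun q ω => h01 ω q.1 q.2) hindep
    (I ×ˢ J) hM hMT hmean

lemma measureReal_heavyBlock_le (hmeas : ∀ i j, Measurable fun ω => A ω i j)
    (h01 : ∀ ω i j, A ω i j = 0 ∨ A ω i j = 1)
    (hindep : iIndepFun (fun (q : Fin n × Fin n) ω => A ω q.1 q.2) μ)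
    (hmax : ∀ i j, n * μ[fun ω => A ω i j] ≤ d) (hd : exp 1 ≤ d) {r : ℝ} (hr : 1 ≤ r)
    {I J : Finset (Fin n)} (hIJ : min (#I : ℝ) #J ≤ n / d)
    (hlarge : 10 * r * log d < min (#I : ℝ) #J) :
    μ.real {ω | 10 * r * log d * max (#I : ℝ) #J ≤ ∑ i ∈ I, ∑ j ∈ J, A ω i j} ≤
      (n : ℝ) ^ (-(2 * r + 2)) * ((n.choose #I : ℝ) * n.choose #J)⁻¹ := by
  set B := 10 * r * log d
  set m := min #I #J
  set k := max #I #J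
  have hd0 : 0 < d := (exp_pos 1).trans_le hd
  have hB : 10 ≤ B := by nlinarith [(le_log_iff_exp_le hd0).2 hd]
  have hIJ_mk : (#I : ℝ) * #J = m * k := by simp [m, k, ← Nat.cast_mul, min_mul_max]
  rw [show min (#I : ℝ) #J = m by simp [m]] at hIJ hlarge
  rw [show max (#I : ℝ) #J = k by simp [k]]
  have hmk : m ≤ k := min_le_max
  have hkn : k ≤ n := max_le (card_le_univ I |>.trans_eq (Fintype.card_fin n))
    (card_le_univ J |>.trans_eq (Fintype.card_fin n))
  have hm0 : (0 : ℝ) < m := by linarith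
  have hk0 : (0 : ℝ) < k := hm0.trans_le (by exact_mod_cast hmk)
  have hn0 : (0 : ℝ) < n := hk0.trans_le (by exact_mod_cast hkn)
  have hmd : (m : ℝ) * d ≤ n := (le_div_iff₀ hd0).1 hIJ
  have hIn : #I ≤ n := (le_max_left _ _).trans hkn
  have hJn : #J ≤ n := (le_max_right _ _).trans hkn
  have hC : 0 < (n.choose #I : ℝ) * n.choose #J := by
    have := Nat.choose_pos hIn
    have := Nat.choose_pos hJn
    positivity
  have hchoose : (n.choose #I : ℝ) * n.choose #J ≤ (exp 1 * n / m) ^ (2 * k) := by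
    have hm : 0 < m := by exact_mod_cast hm0
    rw [two_mul, pow_add]
    gcongr
    · exact Nat.choose_le_exp_one_mul_div_pow_of_le hm (min_le_left _ _) (le_max_left _ _) hIn
    · exact Nat.choose_le_exp_one_mul_div_pow_of_le hm (min_le_right _ _) (le_max_right _ _) hJn
  have hM : (0 : ℝ) < #I * #J * d / n := by
    rw [hIJ_mk]
    positivity
  have hMT : (#I : ℝ) * #J * d / n ≤ B * k := by
    rw [hIJ_mk, div_le_iff₀ hn0]
    nlinarith [mul_le_mul_of_nonneg_right hmd hk0.le,
      mul_le_mul_of_nonneg_right (by linarith : (1 : ℝ) ≤ B) (mul_pos hk0 hn0).le]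
  rw [le_mul_inv_iff₀ hC]
  calc μ.real {ω | B * k ≤ ∑ i ∈ I, ∑ j ∈ J, A ω i j} * ((n.choose #I : ℝ) * n.choose #J)
      ≤ exp (B * k * (1 + log (m * k * d / n) - log (B * k))) * (exp 1 * n / m) ^ (2 * k) := by
        rw [← hIJ_mk]
        gcongr
        exact measureReal_le_blockSum_le_exp hmeas h01 hindep hmax I J hM hMT
    _ ≤ (n : ℝ) ^ (-(2 * r + 2)) := exp_tail_mul_count_le hr hd hlarge hmk hmd

lemma measureReal_blockSum_gt_le (hmeas : ∀ i j, Measurable fun ω => A ω i j)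
    (h01 : ∀ ω i j, A ω i j = 0 ∨ A ω i j = 1)
    (hindep : iIndepFun (fun (q : Fin n × Fin n) ω => A ω q.1 q.2) μ)
    (hmax : ∀ i j, n * μ[fun ω => A ω i j] ≤ d) (hd : exp 1 ≤ d) {r : ℝ} (hr : 1 ≤ r)
    {I J : Finset (Fin n)} (hIJ : min (#I : ℝ) #J ≤ n / d) :
    μ.real {ω | 10 * r * log d * max (#I : ℝ) #J < ∑ i ∈ I, ∑ j ∈ J, A ω i j} ≤
      2 * (n : ℝ) ^ (-(2 * r)) / (n + 1) ^ 2 * ((n.choose #I : ℝ)⁻¹ * (n.choose #J : ℝ)⁻¹) := by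
  set B := 10 * r * log d
  rcases le_or_gt (min (#I : ℝ) #J) B with hsmall | hlarge
  · have hempty : {ω | B * max (#I : ℝ) #J < ∑ i ∈ I, ∑ j ∈ J, A ω i j} = ∅ := by
      refine Set.eq_empty_of_forall_notMem fun ω hω => ?_
      have hsum : ∑ i ∈ I, ∑ j ∈ J, A ω i j ≤ min (#I : ℝ) #J * max (#I : ℝ) #J := by
        calc ∑ i ∈ I, ∑ j ∈ J, A ω i j ≤ ∑ i ∈ I, ∑ j ∈ J, (1 : ℝ) :=
              sum_le_sum fun i _ => sum_le_sum fun j _ => by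
                rcases h01 ω i j with h | h <;> simp [h]
          _ = min (#I : ℝ) #J * max (#I : ℝ) #J := by simp [min_mul_max]
      have : min (#I : ℝ) #J * max (#I : ℝ) #J ≤ B * max (#I : ℝ) #J := by gcongr
      exact (lt_irrefl _) ((hω.trans_le hsum).trans_le this)
    rw [hempty, measureReal_empty]
    positivity
  have hB : 10 ≤ B := by nlinarith [(le_log_iff_exp_le ((exp_pos 1).trans_le hd)).2 hd]
  have hn : (3 : ℝ) ≤ n := by
    have : (#I : ℝ) ≤ n := mod_cast (card_le_univ I).trans_eq (Fintype.card_fin n)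
    linarith [min_le_left (#I : ℝ) #J]
  calc μ.real {ω | B * max (#I : ℝ) #J < ∑ i ∈ I, ∑ j ∈ J, A ω i j}
      ≤ μ.real {ω | B * max (#I : ℝ) #J ≤ ∑ i ∈ I, ∑ j ∈ J, A ω i j} :=
        measureReal_mono (Set.ofPred_subset_ofPred.2 fun _ => le_of_lt)
    _ ≤ (n : ℝ) ^ (-(2 * r + 2)) * ((n.choose #I : ℝ) * n.choose #J)⁻¹ :=
        measureReal_heavyBlock_le hmeas h01 hindep hmax hd hr hIJ hlarge
    _ ≤ _ := by
        rw [mul_inv]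
        gcongr
        exact rpow_neg_add_two_le hn (2 * r)

lemma measure_exists_heavyBlock_le (hmeas : ∀ i j, Measurable fun ω => A ω i j)
    (h01 : ∀ ω i j, A ω i j = 0 ∨ A ω i j = 1)
    (hindep : iIndepFun (fun (q : Fin n × Fin n) ω => A ω q.1 q.2) μ)
    (hmax : ∀ i j, n * μ[fun ω => A ω i j] ≤ d) (hd : exp 1 ≤ d) {r : ℝ} (hr : 1 ≤ r) :
    μ {ω | ∃ I J : Finset (Fin n), min (#I : ℝ) #J ≤ n / d ∧
      10 * r * log d * max (#I : ℝ) #J < ∑ i ∈ I, ∑ j ∈ J, A ω i j} ≤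
      ENNReal.ofReal (2 * (n : ℝ) ^ (-(2 * r))) := by
  set w : Finset (Fin n) → Finset (Fin n) → ℝ := fun I J =>
    2 * (n : ℝ) ^ (-(2 * r)) / (n + 1) ^ 2 * ((n.choose #I : ℝ)⁻¹ * (n.choose #J : ℝ)⁻¹)
  have hblock (I J : Finset (Fin n)) :
      μ {ω | min (#I : ℝ) #J ≤ n / d ∧
        10 * r * log d * max (#I : ℝ) #J < ∑ i ∈ I, ∑ j ∈ J, A ω i j} ≤ ENNReal.ofReal (w I J) := by
    by_cases hIJ : min (#I : ℝ) #J ≤ n / d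
    · rw [← ofReal_measureReal]
      simpa [hIJ] using ENNReal.ofReal_le_ofReal
        (measureReal_blockSum_gt_le hmeas h01 hindep hmax hd hr hIJ)
    · simp [hIJ]
  have hinv := sum_inv_choose_card (Fin n)
  rw [Fintype.card_fin] at hinv
  calc μ {ω | ∃ I J : Finset (Fin n), min (#I : ℝ) #J ≤ n / d ∧
        10 * r * log d * max (#I : ℝ) #J < ∑ i ∈ I, ∑ j ∈ J, A ω i j}
      ≤ ∑ P : Finset (Fin n) × Finset (Fin n), μ {ω | min (#P.1 : ℝ) #P.2 ≤ n / d ∧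
          10 * r * log d * max (#P.1 : ℝ) #P.2 < ∑ i ∈ P.1, ∑ j ∈ P.2, A ω i j} := by
        refine (measure_mono fun ω hω => ?_).trans (measure_iUnion_fintype_le _ _)
        obtain ⟨I, J, hIJ⟩ := hω
        exact Set.mem_iUnion.2 ⟨(I, J), hIJ⟩
    _ ≤ ∑ P : Finset (Fin n) × Finset (Fin n), ENNReal.ofReal (w P.1 P.2) :=
        sum_le_sum fun P _ => hblock P.1 P.2
    _ = ENNReal.ofReal (2 * (n : ℝ) ^ (-(2 * r))) := by
        rw [← ENNReal.ofReal_sum_of_nonneg fun P _ => by positivity]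
        simp only [w]
        rw [← mul_sum, Fintype.sum_prod_type' fun I J : Finset (Fin n) =>
          (n.choose #I : ℝ)⁻¹ * (n.choose #J : ℝ)⁻¹, ← sum_mul_sum, hinv]
        field_simp

end RandomMatrix

/-- Decomposition of the residual, directed graphs (Theorem 6.1). -/
theorem stmt13 (n : ℕ) (Ω : Type*) [MeasureSpace Ω] [IsProbabilityMeasure (ℙ : Measure Ω)]
    (A : Ω → Matrix (Fin n) (Fin n) ℝ) (p : Matrix (Fin n) (Fin n) ℝ) (d r : ℝ)
    (hmeas : ∀ i j, Measurable fun ω => A ω i j)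
    (h01 : ∀ ω i j, A ω i j = 0 ∨ A ω i j = 1)
    (hindep : iIndepFun
      (fun (q : Fin n × Fin n) ω => A ω q.1 q.2) ℙ)
    (hmean : ∀ i j, (∫ ω, A ω i j) = p i j)
    (hd : Real.exp 1 ≤ d)
    (hmax : ∀ i j, (n : ℝ) * p i j ≤ d)
    (hr : 1 ≤ r) :
    ENNReal.ofReal (1 - 2 * (n : ℝ) ^ (-(2 * r))) ≤
      ℙ {ω | ∀ I J : Finset (Fin n),
        min (I.card : ℝ) (J.card : ℝ) ≤ n / d →
        ∃ R C : Finset (Fin n × Fin n), Disjoint R C ∧ R ∪ C = I ×ˢ J ∧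
          (∀ i, (R.filter fun q => q.1 = i).card ≤ min I.card J.card) ∧
          (∀ j, (C.filter fun q => q.2 = j).card ≤ min I.card J.card) ∧
          (∀ i, ((R.filter fun q => q.1 = i ∧ A ω q.1 q.2 = 1).card : ℝ) ≤
            10 * r * Real.log d) ∧
          (∀ j, ((C.filter fun q => q.2 = j ∧ A ω q.1 q.2 = 1).card : ℝ) ≤
            10 * r * Real.log d)} := by
  set B := 10 * r * log d
  have hB : 0 ≤ B := by
    have := (le_log_iff_exp_le ((exp_pos 1).trans_le hd)).2 hd
    positivity
  set E := {ω | ∀ I J : Finset (Fin n), min (#I : ℝ) #J ≤ n / d →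
    ∑ i ∈ I, ∑ j ∈ J, A ω i j ≤ B * max (#I : ℝ) #J}
  have hEc : ℙ Eᶜ ≤ ENNReal.ofReal (2 * (n : ℝ) ^ (-(2 * r))) := by
    refine (measure_mono fun ω hω => ?_).trans (measure_exists_heavyBlock_le hmeas h01 hindep
      (fun i j => hmean i j ▸ hmax i j) hd hr)
    simpa [E] using hω
  refine le_trans ?_ (measure_mono (s := E) fun ω hω I J hIJ => ?_)
  · calc ENNReal.ofReal (1 - 2 * (n : ℝ) ^ (-(2 * r)))
        = 1 - ENNReal.ofReal (2 * (n : ℝ) ^ (-(2 * r))) := by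
          rw [ENNReal.ofReal_sub _ (by positivity), ENNReal.ofReal_one]
      _ ≤ 1 - ℙ Eᶜ := tsub_le_tsub_left hEc 1
      _ ≤ ℙ E := tsub_le_iff_right.2 (by simpa using measure_univ_le_add_compl (μ := ℙ) E)
  · have hA : ∀ i j, 0 ≤ A ω i j := fun i j => by rcases h01 ω i j with h | h <;> simp [h]
    obtain ⟨R, C, h⟩ := exists_isRowColSplit (A ω) hB I J le_rfl fun I' hI' J' hJ' =>
      hω I' J' ((min_le_min (by exact_mod_cast card_le_card hI')
        (by exact_mod_cast card_le_card hJ')).trans hIJ)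
    exact ⟨R, C, h.disjoint, h.union_eq, h.card_row_le, h.card_col_le, h.card_row_eq_one_le hA,
      h.card_col_eq_one_le hA⟩
end

section
/- Let A be an n×n symmetric random matrix whose entries take values in {0,1} and are jointly independent on and above the diagonal, with E A = (p_ij), and let d ≥ e satisfy max_{i,j} n·p_ij ≤ d. Then for any r ≥ 1, with probability at least 1 − 2·n^{−2r}, the following holds simultaneously for all index sets: every subset I×J of [n]×[n] with |I| = m, |J| = k and min(m,k) ≤ n/d can be partitioned into two disjoint subsets ℛ and 𝒞 of [n]×[n] such that (i) for every i ∈ [n], |{j : (i,j) ∈ ℛ}| ≤ 2·min(m,k), and for every j ∈ [n], |{i : (i,j) ∈ 𝒞}| ≤ 2·min(m,k); and (ii) every row of the matrix A_ℛ has at most 20·r·log(d) entries equal to 1, and every column of the matrix A_𝒞 has at most 20·r·log(d) entries equal to 1. -/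
open MeasureTheory ProbabilityTheory

/-!
Call a column `j` heavy for a row set `X` if `A` has at least `t = ⌊20 r log d⌋ + 1` ones in
`X × {j}`.

If every `X` with `|X| ≤ n/d` has at most `|X|/2` heavy columns, the decomposition of `I × J`
(say `|I| ≤ |J|`) is built by peeling: the light columns `J \ J'` go to `𝒞`, the rows of `I` that
are light on the heavy columns `J'` go to `ℛ` (restricted to `J'`), and one recurses on the heavy
rows `I' × J'`. Since `A` is symmetric, rows can be treated as columns, so
`|I'| ≤ |J'|/2 ≤ |I|/4`, and every row and column receives at most `|I|` entries.

Otherwise some `X` with `|X| = a ≤ n/d` has a set `Y` of `a/2 + 1` heavy columns. Then `X × Y`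
contains at least `t (a/2 + 1)` ones, hence, by symmetry, ones at `u ≥ t (a/2 + 1)/2` distinct
positions on or above the diagonal, where the entries are independent. A union bound over `X`,
`Y` and these positions bounds the probability of this by
`C(n,a) C(n,a/2+1) C(a(a/2+1),u) (d/n)^u ≤ n^(-2r-1)`, and summing over `a` gives `2 n^(-2r)`.
-/

open Finset Real

lemma Nat.choose_le_exp_mul (N k : ℕ) (hN : 0 < N) (hk : 0 < k) :
    (N.choose k : ℝ) ≤ exp (k * (1 + Real.log N - Real.log k)) := by
  have hN' : (0 : ℝ) < N := by exact_mod_cast hN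
  have hk' : (0 : ℝ) < k := by exact_mod_cast hk
  have hstirling : (k : ℝ) ^ k / k.factorial ≤ exp k := Real.pow_div_factorial_le_exp _ hk'.le k
  calc (N.choose k : ℝ) ≤ (N : ℝ) ^ k / k.factorial := Nat.choose_le_pow_div k N
    _ = (N / k : ℝ) ^ k * ((k : ℝ) ^ k / k.factorial) := by
        rw [div_pow]; field_simp
    _ ≤ (N / k : ℝ) ^ k * exp k := by gcongr
    _ = exp (k * (1 + Real.log N - Real.log k)) := by
        rw [← Real.exp_log (by positivity : (0 : ℝ) < N / k), ← Real.exp_nat_mul, ← Real.exp_add,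
          Real.log_div hN'.ne' hk'.ne']
        ring_nf

lemma log_le_half_self {x : ℝ} (hx : 0 < x) : log x ≤ x / 2 := by
  have := Real.log_le_sub_one_of_pos (by positivity : 0 < x / exp 1)
  rw [Real.log_div hx.ne' (exp_pos 1).ne', Real.log_exp] at this
  have he := Real.exp_one_gt_d9
  have : x / exp 1 ≤ x / 2 := by gcongr; linarith
  linarith

lemma three_le_log_twentyOne : (3 : ℝ) ≤ log 21 := by
  rw [Real.le_log_iff_exp_le (by norm_num), show (3 : ℝ) = 1 + 1 + 1 by norm_num,
    Real.exp_add, Real.exp_add]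
  have := Real.exp_one_lt_d9
  have h0 := Real.exp_pos 1
  nlinarith [mul_pos h0 h0]

lemma exponent_witness_bound_le {a h u t d r n : ℝ} (hd : exp 1 ≤ d) (hr : 1 ≤ r)
    (ht : 21 ≤ t) (htd : 20 * r * log d ≤ t) (hta : t ≤ a) (had : a * d ≤ n) (hah : a ≤ 2 * h)
    (hu : t * h ≤ 2 * u) :
    a * (1 + log n - log a) + h * (1 + log n - log h) + u * (1 + log (a * h) - log u)
      + u * (log d - log n) ≤ -(2 * r + 1) * log n := by
  have hD : 1 ≤ log d := by rwa [Real.le_log_iff_exp_le (by linarith [exp_pos 1])]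
  have ha : 0 < a := by linarith
  have hh : 1 ≤ h := by linarith
  have hd0 : 0 < d := by linarith [exp_pos 1]
  have hlogn : log a + log d ≤ log n := by
    rw [← Real.log_mul ha.ne' hd0.ne']; exact Real.log_le_log (by positivity) had
  have hlogu : log t + log h - log 2 ≤ log u := by
    rw [← Real.log_mul (by positivity) (by positivity), ← Real.log_div (by positivity) two_ne_zero]
    exact Real.log_le_log (by positivity) (by linarith)
  have hlogah : log a ≤ log 2 + log h := by
    rw [← Real.log_mul two_ne_zero (by positivity)]; exact Real.log_le_log ha (by linarith)
  have hlogt : 3 ≤ log t := three_le_log_twentyOne.trans (Real.log_le_log (by norm_num) ht)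
  have hlog2 := Real.log_two_lt_d9
  have hloga0 : 0 ≤ log a := Real.log_nonneg (by linarith)
  have hloga : log a ≤ h := by linarith [log_le_half_self ha]
  -- In terms of `s = log (n / (a d)) ≥ 0` the exponent is `(a + h + 2r + 1 - u) s` plus terms
  -- that are each a small multiple of `P = t h`, against the gain `u (log t - 1 - log 2) ≥ 0.65 P`.
  set P := t * h
  have hPh : 21 * h ≤ P := by nlinarith
  have hPrh : 20 * (r * h) ≤ P := by nlinarith
  have hPhD : 20 * (h * log d) ≤ P := by nlinarith
  have hgain : 0.65 * P ≤ u * (log t - 1 - log 2) := by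
    nlinarith [mul_le_mul_of_nonneg_right hu (by linarith : (0 : ℝ) ≤ log t - 1 - log 2)]
  have hs : (a + h + 2 * r + 1 - u) * (log n - log a - log d) ≤ 0 :=
    mul_nonpos_of_nonpos_of_nonneg (by nlinarith) (by linarith)
  have hrloga : r * log a ≤ r * h := by nlinarith
  have hrD : (2 * r + 1) * (log a + log d) ≤ 3 * (r * log a) + 3 * (r * log d) := by nlinarith
  have hulogu : u * (log t + log h - log 2) ≤ u * log u := by nlinarith
  have hhloga : h * log a ≤ h * (log 2 + log h) := by nlinarith
  have haD : a * (1 + log d) ≤ 2 * h * (1 + log d) := by nlinarith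
  have hhlog2 : h * log 2 ≤ 0.7 * h := by nlinarith
  rw [Real.log_mul ha.ne' (by positivity)]
  linarith

lemma choose_mul_choose_mul_choose_mul_pow_le {n a h u t : ℕ} {d r : ℝ} (hd : exp 1 ≤ d)
    (hr : 1 ≤ r) (ht : 21 ≤ t) (htd : 20 * r * log d ≤ t) (hta : t ≤ a) (had : a * d ≤ n)
    (hah : a ≤ 2 * h) (hu : t * h ≤ 2 * u) :
    (n.choose a : ℝ) * n.choose h * (a * h).choose u * (d / n) ^ u ≤ (n : ℝ) ^ (-(2 * r + 1)) := by
  have ha : 0 < a := by omega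
  have hh : 0 < h := by omega
  have hu0 : 0 < u := by nlinarith
  have hd0 : 0 < d := (exp_pos 1).trans_le hd
  have hn : (0 : ℝ) < n := lt_of_lt_of_le (by positivity) had
  have hdn : (d / n) ^ u = exp (u * (log d - log n)) := by
    rw [← Real.log_div hd0.ne' hn.ne', Real.exp_nat_mul, Real.exp_log (by positivity)]
  rw [Real.rpow_def_of_pos hn, hdn]
  calc (n.choose a : ℝ) * n.choose h * (a * h).choose u * exp (u * (log d - log n))
      ≤ exp (a * (1 + log n - log a)) * exp (h * (1 + log n - log h)) *
          exp (u * (1 + log (a * h : ℕ) - log u)) * exp (u * (log d - log n)) := by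
        gcongr
        · exact Nat.choose_le_exp_mul n a (by exact_mod_cast hn) ha
        · exact Nat.choose_le_exp_mul n h (by exact_mod_cast hn) hh
        · exact Nat.choose_le_exp_mul _ u (Nat.mul_pos ha hh) hu0
    _ ≤ exp (log n * -(2 * r + 1)) := by
        simp only [← Real.exp_add, Nat.cast_mul]
        gcongr
        linarith [exponent_witness_bound_le (h := h) (u := u) hd hr (by exact_mod_cast ht) htd
          (by exact_mod_cast hta) had (by exact_mod_cast hah) (by exact_mod_cast hu)]

lemma add_one_mul_rpow_neg_le (n : ℕ) {r : ℝ} (hr : 0 < r) :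
    ((n : ℝ) + 1) * (n : ℝ) ^ (-(2 * r + 1)) ≤ 2 * (n : ℝ) ^ (-(2 * r)) := by
  rcases n.eq_zero_or_pos with rfl | hn
  · rw [Nat.cast_zero, Real.zero_rpow (by linarith), Real.zero_rpow (by linarith)]
    norm_num
  have hn' : (1 : ℝ) ≤ n := by exact_mod_cast hn
  rw [neg_add, Real.rpow_add (by positivity), Real.rpow_neg_one]
  have : 0 ≤ (n : ℝ) ^ (-(2 * r)) := by positivity
  calc ((n : ℝ) + 1) * ((n : ℝ) ^ (-(2 * r)) * (n : ℝ)⁻¹)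
      = (n : ℝ) ^ (-(2 * r)) * ((n + 1) / n) := by ring
    _ ≤ (n : ℝ) ^ (-(2 * r)) * 2 := by
        gcongr; rw [div_le_iff₀ (by positivity)]; linarith
    _ = 2 * (n : ℝ) ^ (-(2 * r)) := by ring

namespace Finset

variable {α β : Type*}

lemma card_filter_fst_eq_product [DecidableEq α] (X : Finset α) (Y : Finset β) (i : α) :
    #((X ×ˢ Y).filter fun q => q.1 = i) = if i ∈ X then #Y else 0 := by
  rw [filter_product_left (· = i), card_product, filter_eq']
  split_ifs <;> simp

lemma card_filter_snd_eq_product [DecidableEq β] (X : Finset α) (Y : Finset β) (j : β) :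
    #((X ×ˢ Y).filter fun q => q.2 = j) = if j ∈ Y then #X else 0 := by
  rw [filter_product_right (· = j), card_product, filter_eq']
  split_ifs <;> simp

lemma card_filter_fst_eq_and_product [DecidableEq α] (G : α → β → Prop) [DecidableRel G]
    (X : Finset α) (Y : Finset β) (i : α) :
    #((X ×ˢ Y).filter fun q => q.1 = i ∧ G q.1 q.2) =
      if i ∈ X then #(Y.filter (G i)) else 0 := by
  rw [filter_congr (q := fun q => q.1 = i ∧ G i q.2) (by rintro ⟨_, _⟩ -; simp +contextual),
    filter_product (· = i) (G i), card_product, filter_eq']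
  split_ifs <;> simp

lemma card_filter_snd_eq_and_product [DecidableEq β] (G : α → β → Prop) [DecidableRel G]
    (X : Finset α) (Y : Finset β) (j : β) :
    #((X ×ˢ Y).filter fun q => q.2 = j ∧ G q.1 q.2) =
      if j ∈ Y then #(X.filter (G · j)) else 0 := by
  rw [filter_congr (q := fun q => G q.1 j ∧ q.2 = j)
      (by rintro ⟨_, _⟩ -; simp +contextual [and_comm]),
    filter_product (G · j) (· = j), card_product, filter_eq']
  split_ifs <;> simp

lemma filter_eq_empty_of_map_notMem {ι γ : Type*} {s : Finset ι} {p : ι → Prop} [DecidablePred p]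
    {f : ι → γ} {Z : Finset γ} {c : γ} (hs : ∀ x ∈ s, f x ∈ Z) (hc : c ∉ Z)
    (hp : ∀ x, p x → f x = c) : s.filter p = ∅ :=
  filter_eq_empty_iff.2 fun x hx hpx => hc (hp x hpx ▸ hs x hx)

end Finset

section Split

variable {α β : Type*} [DecidableEq α] [DecidableEq β]

structure IsSplit (G : α → β → Prop) [DecidableRel G] (t k : ℕ) (X : Finset α) (Y : Finset β)
    (R C : Finset (α × β)) : Prop where
  disjoint : Disjoint R C
  union_eq : R ∪ C = X ×ˢ Y
  card_row_le : ∀ i, #(R.filter fun q => q.1 = i) ≤ k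
  card_col_le : ∀ j, #(C.filter fun q => q.2 = j) ≤ k
  card_row_lt : ∀ i, #(R.filter fun q => q.1 = i ∧ G q.1 q.2) < t
  card_col_lt : ∀ j, #(C.filter fun q => q.2 = j ∧ G q.1 q.2) < t

namespace IsSplit

variable {G : α → β → Prop} [DecidableRel G] {t k : ℕ} {X X' : Finset α} {Y Y' : Finset β}
  {R C : Finset (α × β)}

lemma mono {k' : ℕ} (hs : IsSplit G t k X Y R C) (hk : k ≤ k') : IsSplit G t k' X Y R C where
  disjoint := hs.disjoint
  union_eq := hs.union_eq
  card_row_le i := (hs.card_row_le i).trans hk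
  card_col_le j := (hs.card_col_le j).trans hk
  card_row_lt := hs.card_row_lt
  card_col_lt := hs.card_col_lt

lemma extend (hs : IsSplit G t k X' Y' R C) (ht : 0 < t) (hX' : X' ⊆ X) (hY' : Y' ⊆ Y)
    (hXk : #X ≤ k) (hYk : #Y' ≤ k) (hrow : ∀ i ∈ X \ X', #(Y'.filter (G i)) < t)
    (hcol : ∀ j ∈ Y \ Y', #(X.filter (G · j)) < t) :
    IsSplit G t k X Y ((X \ X') ×ˢ Y' ∪ R) (X ×ˢ (Y \ Y') ∪ C) := by
  have hRC : ∀ q, q ∈ R ∨ q ∈ C ↔ q.1 ∈ X' ∧ q.2 ∈ Y' := fun q => by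
    rw [← mem_union, hs.union_eq, mem_product]
  have hR : ∀ q ∈ R, q.1 ∈ X' ∧ q.2 ∈ Y' := fun q hq => (hRC q).1 (.inl hq)
  have hC : ∀ q ∈ C, q.1 ∈ X' ∧ q.2 ∈ Y' := fun q hq => (hRC q).1 (.inr hq)
  have hdisj := disjoint_left.1 hs.disjoint
  refine ⟨?_, ?_, fun i => ?_, fun j => ?_, fun i => ?_, fun j => ?_⟩
  · rw [disjoint_left]; grind
  · ext q; grind
  · rw [filter_union]
    refine (card_union_le _ _).trans ?_
    rw [card_filter_fst_eq_product]
    by_cases hi : i ∈ X'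
    · simp [hi, hs.card_row_le i]
    · rw [filter_eq_empty_of_map_notMem (fun q hq => (hR q hq).1) hi (fun _ => id)]
      split_ifs <;> simp [*]
  · rw [filter_union]
    refine (card_union_le _ _).trans ?_
    rw [card_filter_snd_eq_product]
    by_cases hj : j ∈ Y'
    · simp [hj, (hs.card_col_le j)]
    · rw [filter_eq_empty_of_map_notMem (fun q hq => (hC q hq).2) hj (fun _ => id)]
      split_ifs <;> simp [*]
  · rw [filter_union]
    refine (card_union_le _ _).trans_lt ?_
    rw [card_filter_fst_eq_and_product]
    by_cases hi : i ∈ X'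
    · simp [hi, hs.card_row_lt i]
    · rw [filter_eq_empty_of_map_notMem (fun q hq => (hR q hq).1) hi (fun _ => And.left)]
      split_ifs with h
      exacts [by simpa using hrow i h, by simpa using ht]
  · rw [filter_union]
    refine (card_union_le _ _).trans_lt ?_
    rw [card_filter_snd_eq_and_product]
    by_cases hj : j ∈ Y'
    · simp [hj, hs.card_col_lt j]
    · rw [filter_eq_empty_of_map_notMem (fun q hq => (hC q hq).2) hj (fun _ => And.left)]
      split_ifs with h
      exacts [by simpa using hcol j h, by simpa using ht]

section Symm

variable {G : α → α → Prop} [DecidableRel G] {t k : ℕ} {X Y : Finset α} {R C : Finset (α × α)}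

lemma swap [Std.Symm G] (hs : IsSplit G t k X Y R C) :
    IsSplit G t k Y X (C.map ⟨Prod.swap, Prod.swap_injective⟩)
      (R.map ⟨Prod.swap, Prod.swap_injective⟩) where
  disjoint := (disjoint_map _).2 hs.disjoint.symm
  union_eq := by rw [← map_union, union_comm, hs.union_eq, map_swap_product]
  card_row_le i := by rw [filter_map, card_map]; exact hs.card_col_le i
  card_col_le j := by rw [filter_map, card_map]; exact hs.card_row_le j
  card_row_lt i := by
    rw [filter_map, card_map]
    convert hs.card_col_lt i using 3 with q
    exact and_congr_right' (Std.Symm.iff q.2 q.1)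
  card_col_lt j := by
    rw [filter_map, card_map]
    convert hs.card_row_lt j using 3 with q
    exact and_congr_right' (Std.Symm.iff q.2 q.1)

end Symm

end IsSplit

def heavyCols (G : α → β → Prop) [DecidableRel G] (t : ℕ) (X : Finset α) (Y : Finset β) :
    Finset β :=
  Y.filter fun j => t ≤ #(X.filter (G · j))

def FewHeavyCols [Fintype α] (G : α → α → Prop) [DecidableRel G] (t : ℕ) (M : ℝ) : Prop :=
  ∀ X : Finset α, (#X : ℝ) ≤ M → 2 * #(heavyCols G t X univ) ≤ #X

namespace FewHeavyCols

variable [Fintype α] {G : α → α → Prop} [DecidableRel G] [Std.Symm G] {t : ℕ} {M : ℝ}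

theorem exists_isSplit_of_card_le (hH : FewHeavyCols G t M) (ht : 0 < t)
    (X Y : Finset α) (hXM : (#X : ℝ) ≤ M) : ∃ R C, IsSplit G t #X X Y R C := by
  induction X using Finset.strongInduction generalizing Y with
  | H X ih =>
  rcases X.eq_empty_or_nonempty with rfl | hX
  · exact ⟨∅, ∅, by simp, by simp, by simp, by simp, by simp [ht], by simp [ht]⟩
  set Y' := heavyCols G t X Y
  -- by symmetry of `G`, these are the rows of `X` that are heavy on the columns `Y'`
  set X' := heavyCols G t Y' X
  have hmono : ∀ Z W : Finset α, heavyCols G t Z W ⊆ heavyCols G t Z univ :=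
    fun Z W => filter_subset_filter _ (subset_univ W)
  have hY' : 2 * #Y' ≤ #X := (Nat.mul_le_mul_left 2 (card_le_card (hmono X Y))).trans (hH X hXM)
  have hYM : (#Y' : ℝ) ≤ M := le_trans (by exact_mod_cast (by omega : #Y' ≤ #X)) hXM
  have hX' : 2 * #X' ≤ #Y' := (Nat.mul_le_mul_left 2 (card_le_card (hmono Y' X))).trans (hH Y' hYM)
  have hX'X : X' ⊆ X := filter_subset _ _
  have hX'lt : X' ⊂ X := Finset.ssubset_iff_subset_ne.2 ⟨hX'X, fun h => by
    have := hX.card_pos; rw [h] at hX'; omega⟩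
  obtain ⟨R, C, hs⟩ := ih X' hX'lt Y' (le_trans (by exact_mod_cast card_le_card hX'X) hXM)
  refine ⟨_, _, (hs.mono (card_le_card hX'X)).extend ht hX'X (filter_subset _ _) le_rfl
    (by omega) (fun i hi => ?_) (fun j hj => ?_)⟩
  · have := (mem_sdiff.1 hi).2
    simp only [X', heavyCols, mem_filter, not_and, not_le] at this
    rw [filter_congr fun j _ => Std.Symm.iff (r := G) i j]
    exact this (mem_sdiff.1 hi).1
  · have := (mem_sdiff.1 hj).2
    simp only [Y', heavyCols, mem_filter, not_and, not_le] at this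
    exact this (mem_sdiff.1 hj).1

theorem exists_isSplit (hH : FewHeavyCols G t M) (ht : 0 < t) (I J : Finset α)
    (hIJ : (min #I #J : ℝ) ≤ M) : ∃ R C, IsSplit G t (min #I #J) I J R C := by
  rcases le_total #I #J with h | h
  · rw [min_eq_left h]
    rw [min_eq_left (by exact_mod_cast h)] at hIJ
    exact hH.exists_isSplit_of_card_le ht I J hIJ
  · rw [min_eq_right h]
    rw [min_eq_right (by exact_mod_cast h)] at hIJ
    obtain ⟨R, C, hs⟩ := hH.exists_isSplit_of_card_le ht J I hIJ
    exact ⟨_, _, hs.swap⟩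

end FewHeavyCols

end Split

section Witnesses

variable {α : Type*} [LinearOrder α]

def sortPair (q : α × α) : α × α := (min q.1 q.2, max q.1 q.2)

lemma sortPair_fst_le (q : α × α) : (sortPair q).1 ≤ (sortPair q).2 := min_le_max

lemma sortPair_eq_or (q : α × α) : sortPair q = q ∨ sortPair q = q.swap := by
  rcases le_total q.1 q.2 with h | h
  exacts [.inl (Prod.ext (min_eq_left h) (max_eq_right h)),
    .inr (Prod.ext (min_eq_right h) (max_eq_left h))]

lemma exists_subset_image_sortPair {G : α → α → Prop} [DecidableRel G] [Std.Symm G] {t : ℕ}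
    {X Y : Finset α} (hY : ∀ j ∈ Y, t ≤ #(X.filter (G · j))) :
    ∃ Q ⊆ (X ×ˢ Y).image sortPair, #Q = (t * #Y + 1) / 2 ∧ ∀ q ∈ Q, G q.1 q.2 := by
  set S := (X ×ˢ Y).filter fun q => G q.1 q.2
  have hS : t * #Y ≤ #S := by
    rw [show #S = ∑ j ∈ Y, #(X.filter (G · j)) by simp only [S, card_filter, sum_product_right],
      mul_comm, ← smul_eq_mul]
    exact card_nsmul_le_sum _ _ _ hY
  have hfiber : #S ≤ 2 * #(S.image sortPair) := by
    refine card_le_mul_card_image _ 2 fun b _ => ?_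
    refine (card_le_card (t := {b, b.swap}) fun q hq => ?_).trans card_le_two
    obtain ⟨-, rfl⟩ := mem_filter.1 hq
    rcases sortPair_eq_or q with h | h <;> rw [h] <;> simp
  obtain ⟨Q, hQ, hcard⟩ :=
    exists_subset_card_eq (s := S.image sortPair) (n := (t * #Y + 1) / 2) (by omega)
  refine ⟨Q, hQ.trans (image_subset_image (filter_subset _ _)), hcard, fun q hq => ?_⟩
  obtain ⟨q₀, hq₀, rfl⟩ := mem_image.1 (hQ hq)
  have hG := (mem_filter.1 hq₀).2
  rcases sortPair_eq_or q₀ with h | h <;> rw [h]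
  exacts [hG, Std.Symm.symm _ _ hG]

variable [Fintype α]

def heavyWitnesses (t a : ℕ) : Finset (Finset (α × α)) :=
  (powersetCard a univ).biUnion fun X => (powersetCard (a / 2 + 1) univ).biUnion fun Y =>
    powersetCard ((t * (a / 2 + 1) + 1) / 2) ((X ×ˢ Y).image sortPair)

lemma card_heavyWitnesses_le (t a : ℕ) :
    #(heavyWitnesses (α := α) t a) ≤ (Fintype.card α).choose a * (Fintype.card α).choose (a / 2 + 1)
      * (a * (a / 2 + 1)).choose ((t * (a / 2 + 1) + 1) / 2) := by
  refine card_biUnion_le.trans ?_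
  rw [mul_assoc, ← card_univ, ← card_powersetCard, ← smul_eq_mul]
  refine sum_le_card_nsmul _ _ _ fun X hX => card_biUnion_le.trans ?_
  rw [← card_powersetCard, ← smul_eq_mul]
  refine sum_le_card_nsmul _ _ _ fun Y hY => ?_
  rw [card_powersetCard]
  refine Nat.choose_le_choose _ (card_image_le.trans ?_)
  rw [card_product, (mem_powersetCard.1 hX).2, (mem_powersetCard.1 hY).2]

lemma exists_mem_heavyWitnesses {G : α → α → Prop} [DecidableRel G] [Std.Symm G] {t : ℕ}
    {X : Finset α} (hX : #X < 2 * #(heavyCols G t X univ)) :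
    t ≤ #X ∧ ∃ Q ∈ heavyWitnesses t #X, ∀ q ∈ Q, G q.1 q.2 := by
  obtain ⟨j, hj⟩ : (heavyCols G t X univ).Nonempty := card_pos.1 (by omega)
  obtain ⟨Y, hYH, hY⟩ :=
    exists_subset_card_eq (s := heavyCols G t X univ) (n := #X / 2 + 1) (by omega)
  have hheavy : ∀ j ∈ Y, t ≤ #(X.filter (G · j)) := fun j hj => (mem_filter.1 (hYH hj)).2
  obtain ⟨Q, hQ, hcard, hG⟩ := exists_subset_image_sortPair hheavy
  refine ⟨(mem_filter.1 hj).2.trans (card_filter_le _ _), Q, ?_, hG⟩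
  simp only [heavyWitnesses, mem_biUnion, mem_powersetCard]
  exact ⟨X, ⟨subset_univ _, rfl⟩, Y, ⟨subset_univ _, hY⟩, hQ, by rw [hcard, hY]⟩

end Witnesses

section Probability

variable {Ω : Type*} [MeasurableSpace Ω] {μ : Measure Ω}

lemma measure_eq_one_eq_ofReal_integral [IsFiniteMeasure μ] {X : Ω → ℝ} (hX : Measurable X)
    (h01 : ∀ ω, X ω = 0 ∨ X ω = 1) : μ {ω | X ω = 1} = ENNReal.ofReal (∫ ω, X ω ∂μ) := by
  have hs : MeasurableSet {ω | X ω = 1} := hX (measurableSet_singleton 1)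
  have hind : (fun ω => X ω) = {ω | X ω = 1}.indicator 1 := by
    ext ω
    rcases h01 ω with h | h <;> simp [Set.indicator, h]
  rw [hind, integral_indicator_one hs, ofReal_measureReal]

lemma measure_forall_eq_one_le {ι : Type*} {Y : ι → Ω → ℝ} (hY : iIndepFun Y μ) {ε : ENNReal}
    (hε : ∀ i, μ {ω | Y i ω = 1} ≤ ε) (S : Finset ι) :
    μ {ω | ∀ i ∈ S, Y i ω = 1} ≤ ε ^ #S := by
  have hS : {ω | ∀ i ∈ S, Y i ω = 1} = ⋂ i ∈ S, Y i ⁻¹' {1} := by ext; simp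
  rw [hS, hY.measure_inter_preimage_eq_mul S fun _ _ => measurableSet_singleton 1, ← prod_const]
  exact prod_le_prod' fun i _ => hε i

lemma ofReal_one_sub_le_measure [IsProbabilityMeasure μ] {s : Set Ω} {x : ℝ} (hx : 0 ≤ x)
    (hs : μ sᶜ ≤ ENNReal.ofReal x) : ENNReal.ofReal (1 - x) ≤ μ s := by
  rw [ENNReal.ofReal_sub 1 hx, ENNReal.ofReal_one, tsub_le_iff_right]
  calc (1 : ENNReal) = μ (s ∪ sᶜ) := by rw [Set.union_compl_self, measure_univ]
    _ ≤ μ s + μ sᶜ := measure_union_le _ _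
    _ ≤ μ s + ENNReal.ofReal x := by gcongr

def Matrix.Adj {α : Type*} (B : Matrix α α ℝ) (i j : α) : Prop := B i j = 1

noncomputable instance {α : Type*} (B : Matrix α α ℝ) : DecidableRel B.Adj :=
  fun i j => inferInstanceAs (Decidable (B i j = 1))

lemma Matrix.adj_symm {α : Type*} {B : Matrix α α ℝ} (hB : ∀ i j, B i j = B j i) :
    Std.Symm B.Adj :=
  ⟨fun i j h => (hB j i).trans h⟩

variable {n : ℕ} {A : Ω → Matrix (Fin n) (Fin n) ℝ} {d r : ℝ} {t : ℕ}

lemma measure_biUnion_heavyWitnesses_le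
    (hindep : iIndepFun (fun (q : {q : Fin n × Fin n // q.1 ≤ q.2}) ω => A ω q.1.1 q.1.2) μ)
    (hentry : ∀ i j, μ {ω | A ω i j = 1} ≤ ENNReal.ofReal (d / n))
    (hd : exp 1 ≤ d) (hr : 1 ≤ r) (ht : 21 ≤ t) (htd : 20 * r * log d ≤ t) {a : ℕ}
    (hta : t ≤ a) (had : a * d ≤ n) :
    μ (⋃ Q ∈ heavyWitnesses t a, {ω | ∀ q ∈ Q, A ω q.1 q.2 = 1}) ≤
      ENNReal.ofReal ((n : ℝ) ^ (-(2 * r + 1))) := by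
  set u := (t * (a / 2 + 1) + 1) / 2
  have hdn : 0 ≤ d / n := div_nonneg ((exp_pos 1).le.trans hd) n.cast_nonneg
  have hQ : ∀ Q ∈ heavyWitnesses t a, μ {ω | ∀ q ∈ Q, A ω q.1 q.2 = 1} ≤
      ENNReal.ofReal ((d / n) ^ u) := by
    intro Q hQ
    simp only [heavyWitnesses, mem_biUnion, mem_powersetCard] at hQ
    obtain ⟨X, -, Y, -, hQsub, hQcard⟩ := hQ
    have hup : ∀ q ∈ Q, q.1 ≤ q.2 := fun q hq => by
      obtain ⟨q₀, -, rfl⟩ := mem_image.1 (hQsub hq)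
      exact sortPair_fst_le q₀
    calc μ {ω | ∀ q ∈ Q, A ω q.1 q.2 = 1}
        ≤ μ {ω | ∀ i ∈ Q.subtype (fun q : Fin n × Fin n => q.1 ≤ q.2), A ω i.1.1 i.1.2 = 1} :=
          measure_mono fun ω hω i hi => hω _ (mem_subtype.1 hi)
      _ ≤ ENNReal.ofReal (d / n) ^ #(Q.subtype fun q : Fin n × Fin n => q.1 ≤ q.2) :=
          measure_forall_eq_one_le hindep (fun i => hentry _ _) _
      _ = ENNReal.ofReal ((d / n) ^ u) := by
          rw [card_subtype, filter_true_of_mem hup, hQcard, ENNReal.ofReal_pow hdn]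
  have hcount : (#(heavyWitnesses (α := Fin n) t a) : ℝ) * (d / n) ^ u ≤ (n : ℝ) ^ (-(2 * r + 1)) :=
    calc (#(heavyWitnesses (α := Fin n) t a) : ℝ) * (d / n) ^ u
        ≤ (n.choose a : ℝ) * n.choose (a / 2 + 1) * (a * (a / 2 + 1)).choose u * (d / n) ^ u := by
          gcongr
          exact_mod_cast Fintype.card_fin n ▸ card_heavyWitnesses_le t a
      _ ≤ (n : ℝ) ^ (-(2 * r + 1)) :=
          choose_mul_choose_mul_choose_mul_pow_le hd hr ht htd hta had (by omega) (by omega)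
  calc μ (⋃ Q ∈ heavyWitnesses t a, {ω | ∀ q ∈ Q, A ω q.1 q.2 = 1})
      ≤ ∑ Q ∈ heavyWitnesses t a, μ {ω | ∀ q ∈ Q, A ω q.1 q.2 = 1} := measure_biUnion_finset_le _ _
    _ ≤ #(heavyWitnesses t a) • ENNReal.ofReal ((d / n) ^ u) := sum_le_card_nsmul _ _ _ hQ
    _ ≤ ENNReal.ofReal ((n : ℝ) ^ (-(2 * r + 1))) := by
        rw [nsmul_eq_mul, ← ENNReal.ofReal_natCast, ← ENNReal.ofReal_mul (by positivity)]
        exact ENNReal.ofReal_le_ofReal hcount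

theorem measure_not_fewHeavyCols_le (hsym : ∀ ω i j, A ω i j = A ω j i)
    (hindep : iIndepFun (fun (q : {q : Fin n × Fin n // q.1 ≤ q.2}) ω => A ω q.1.1 q.1.2) μ)
    (hentry : ∀ i j, μ {ω | A ω i j = 1} ≤ ENNReal.ofReal (d / n))
    (hd : exp 1 ≤ d) (hr : 1 ≤ r) (ht : 21 ≤ t) (htd : 20 * r * log d ≤ t) :
    μ {ω | ¬ FewHeavyCols (A ω).Adj t (n / d)} ≤
      ENNReal.ofReal (2 * (n : ℝ) ^ (-(2 * r))) := by
  have hd0 : 0 < d := (exp_pos 1).trans_le hd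
  set S := (range (n + 1)).filter fun a => t ≤ a ∧ (a : ℝ) ≤ n / d
  have hbad : {ω | ¬ FewHeavyCols (A ω).Adj t (n / d)} ⊆
      ⋃ a ∈ S, ⋃ Q ∈ heavyWitnesses t a, {ω | ∀ q ∈ Q, A ω q.1 q.2 = 1} := by
    intro ω hω
    obtain ⟨X, hXM, hX⟩ : ∃ X : Finset (Fin n), (#X : ℝ) ≤ n / d ∧
        #X < 2 * #(heavyCols (A ω).Adj t X univ) := by
      simpa [FewHeavyCols] using hω
    have := Matrix.adj_symm (hsym ω)
    obtain ⟨htX, Q, hQ, hones⟩ := exists_mem_heavyWitnesses hX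
    simp only [Set.mem_iUnion]
    refine ⟨#X, mem_filter.2 ⟨mem_range.2 ?_, htX, hXM⟩, Q, hQ, hones⟩
    simpa using X.card_le_univ
  have hlevel : ∀ a ∈ S, μ (⋃ Q ∈ heavyWitnesses t a, {ω | ∀ q ∈ Q, A ω q.1 q.2 = 1}) ≤
      ENNReal.ofReal ((n : ℝ) ^ (-(2 * r + 1))) := fun a ha => by
    obtain ⟨hta, had⟩ := (mem_filter.1 ha).2
    exact measure_biUnion_heavyWitnesses_le hindep hentry hd hr ht htd hta
      ((le_div_iff₀ hd0).1 had)
  calc μ {ω | ¬ FewHeavyCols (A ω).Adj t (n / d)}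
      ≤ ∑ a ∈ S, μ (⋃ Q ∈ heavyWitnesses t a, {ω | ∀ q ∈ Q, A ω q.1 q.2 = 1}) :=
        (measure_mono hbad).trans (measure_biUnion_finset_le _ _)
    _ ≤ #S • ENNReal.ofReal ((n : ℝ) ^ (-(2 * r + 1))) := sum_le_card_nsmul _ _ _ hlevel
    _ ≤ (n + 1) • ENNReal.ofReal ((n : ℝ) ^ (-(2 * r + 1))) := by
        gcongr
        simpa using card_filter_le (range (n + 1)) _
    _ ≤ ENNReal.ofReal (2 * (n : ℝ) ^ (-(2 * r))) := by
        rw [nsmul_eq_mul, ← ENNReal.ofReal_natCast, ← ENNReal.ofReal_mul (by positivity)]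
        exact ENNReal.ofReal_le_ofReal (by exact_mod_cast add_one_mul_rpow_neg_le n (by linarith))

end Probability

/-- Decomposition of the residual, undirected graphs (Theorem 6.2). -/
theorem stmt14 (n : ℕ) (Ω : Type*) [MeasureSpace Ω] [IsProbabilityMeasure (ℙ : Measure Ω)]
    (A : Ω → Matrix (Fin n) (Fin n) ℝ) (p : Matrix (Fin n) (Fin n) ℝ) (d r : ℝ)
    (hmeas : ∀ i j, Measurable fun ω => A ω i j)
    (h01 : ∀ ω i j, A ω i j = 0 ∨ A ω i j = 1)
    (hsym : ∀ ω i j, A ω i j = A ω j i)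
    (hindep : iIndepFun
      (fun (q : {q : Fin n × Fin n // q.1 ≤ q.2}) ω => A ω q.1.1 q.1.2) ℙ)
    (hmean : ∀ i j, (∫ ω, A ω i j) = p i j)
    (hd : Real.exp 1 ≤ d)
    (hmax : ∀ i j, (n : ℝ) * p i j ≤ d)
    (hr : 1 ≤ r) :
    ENNReal.ofReal (1 - 2 * (n : ℝ) ^ (-(2 * r))) ≤
      ℙ {ω | ∀ I J : Finset (Fin n),
        min (I.card : ℝ) (J.card : ℝ) ≤ n / d →
        ∃ R C : Finset (Fin n × Fin n), Disjoint R C ∧ R ∪ C = I ×ˢ J ∧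
          (∀ i, (R.filter fun q => q.1 = i).card ≤ 2 * min I.card J.card) ∧
          (∀ j, (C.filter fun q => q.2 = j).card ≤ 2 * min I.card J.card) ∧
          (∀ i, ((R.filter fun q => q.1 = i ∧ A ω q.1 q.2 = 1).card : ℝ) ≤
            20 * r * Real.log d) ∧
          (∀ j, ((C.filter fun q => q.2 = j ∧ A ω q.1 q.2 = 1).card : ℝ) ≤
            20 * r * Real.log d)} := by
  have hlogd : 1 ≤ log d := by rwa [Real.le_log_iff_exp_le ((exp_pos 1).trans_le hd)]
  set t := ⌊20 * r * log d⌋₊ + 1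
  have hlight : ∀ m < t, (m : ℝ) ≤ 20 * r * log d := fun m hm =>
    (Nat.cast_le.2 (Nat.lt_succ_iff.1 hm)).trans (Nat.floor_le (by positivity))
  have htd : 20 * r * log d ≤ t := by
    simpa [t] using (Nat.lt_floor_add_one (20 * r * log d)).le
  have ht : 21 ≤ t := by
    have : 20 ≤ ⌊20 * r * log d⌋₊ := Nat.le_floor (by push_cast; nlinarith)
    omega
  have hentry : ∀ i j, ℙ {ω | A ω i j = 1} ≤ ENNReal.ofReal (d / n) := fun i j => by
    rw [measure_eq_one_eq_ofReal_integral (hmeas i j) (h01 · i j), hmean]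
    exact ENNReal.ofReal_le_ofReal ((le_div_iff₀ (by simpa using i.pos)).2 (by linarith [hmax i j]))
  refine ofReal_one_sub_le_measure (by positivity) ((measure_mono fun ω hω hfew => ?_).trans
    (measure_not_fewHeavyCols_le hsym hindep hentry hd hr ht htd))
  refine hω fun I J hIJ => ?_
  have := Matrix.adj_symm (hsym ω)
  obtain ⟨R, C, hs⟩ := hfew.exists_isSplit (Nat.succ_pos _) I J (by exact_mod_cast hIJ)
  exact ⟨R, C, hs.disjoint, hs.union_eq, fun i => (hs.card_row_le i).trans (by omega),
    fun j => (hs.card_col_le j).trans (by omega), fun i => hlight _ (hs.card_row_lt i),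
    fun j => hlight _ (hs.card_col_lt j)⟩
end

section
/- Let B be an n×n symmetric matrix with nonnegative entries, let 𝒞 be a subset of [n]×[n], and let ε ∈ (0,1). Let B_𝒞 denote the n×n matrix that agrees with B on 𝒞 and is zero outside 𝒞. Suppose that for every i ∈ [n], the i-th row sum of B_𝒞 is at most ε times the i-th row sum of B, i.e. Σ_{j : (i,j) ∈ 𝒞} B_ij ≤ ε·Σ_{j=1}^n B_ij. Then ‖(L(B))_𝒞‖ ≤ √ε, where (L(B))_𝒞 denotes the n×n matrix that agrees with L(B) on 𝒞 and is zero outside 𝒞. -/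
open MeasureTheory ProbabilityTheory

/-! Write the masked averaging operator entrywise as `s i j / (√(d i) * √(d j))` with `s` the masked
matrix and `d` the degrees. Splitting `s` as `√s * √s` and applying Cauchy–Schwarz row by row
(the Schur test) bounds its squared norm by the product of the worst row ratio `∑ⱼ s i j / d i ≤ ε`
and the worst column ratio, which is at most `1` because `B` is symmetric. -/

open Finset
open scoped Matrix

section SchurTest

variable {m k : Type*} [Fintype m] [Fintype k]

lemma opNorm_le_sqrt_of_sum_sq_mulVec_le [DecidableEq k] (A : Matrix m k ℝ) {C : ℝ} (hC : 0 ≤ C)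
    (h : ∀ x : k → ℝ, ∑ i, (A *ᵥ x) i ^ 2 ≤ C * ∑ j, x j ^ 2) :
    opNorm A ≤ √C := by
  refine ContinuousLinearMap.opNorm_le_bound _ (Real.sqrt_nonneg C) fun x => ?_
  rw [LinearMap.coe_toContinuousLinearMap', EuclideanSpace.norm_eq,
    EuclideanSpace.norm_eq, ← Real.sqrt_mul hC]
  simp only [Real.norm_eq_abs, sq_abs]
  exact Real.sqrt_le_sqrt (h x.ofLp)

lemma sq_sum_div_sqrt_mul_sqrt_mul_le (s c x : k → ℝ) {r : ℝ} (hs : ∀ j, 0 ≤ s j) (hr : 0 ≤ r)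
    (hc : ∀ j, 0 ≤ c j) :
    (∑ j, s j / (√r * √(c j)) * x j) ^ 2 ≤ (∑ j, s j) / r * ∑ j, s j * x j ^ 2 / c j := by
  have hsplit : ∀ j, s j / (√r * √(c j)) * x j = √(s j) / √r * (√(s j) * x j / √(c j)) := by
    intro j
    rw [div_mul_div_comm, ← mul_assoc, Real.mul_self_sqrt (hs j), mul_div_right_comm]
  calc (∑ j, s j / (√r * √(c j)) * x j) ^ 2
      = (∑ j, √(s j) / √r * (√(s j) * x j / √(c j))) ^ 2 := by simp only [hsplit]
    _ ≤ (∑ j, (√(s j) / √r) ^ 2) * ∑ j, (√(s j) * x j / √(c j)) ^ 2 :=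
        sum_mul_sq_le_sq_mul_sq _ _ _
    _ = (∑ j, s j) / r * ∑ j, s j * x j ^ 2 / c j := by
        simp only [div_pow, mul_pow, Real.sq_sqrt (hs _), Real.sq_sqrt hr, Real.sq_sqrt (hc _),
          sum_div]

lemma opNorm_le_sqrt_mul_of_sum_le [DecidableEq k] (s : Matrix m k ℝ) (r : m → ℝ) (c : k → ℝ)
    {α β : ℝ} (hs : ∀ i j, 0 ≤ s i j) (hr : ∀ i, 0 ≤ r i) (hc : ∀ j, 0 ≤ c j) (hα : 0 ≤ α)
    (hβ : 0 ≤ β) (hrow : ∀ i, ∑ j, s i j ≤ α * r i) (hcol : ∀ j, ∑ i, s i j ≤ β * c j) :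
    opNorm (Matrix.of fun i j => s i j / (√(r i) * √(c j))) ≤ √(α * β) := by
  refine opNorm_le_sqrt_of_sum_sq_mulVec_le _ (mul_nonneg hα hβ) fun x => ?_
  calc ∑ i, (∑ j, s i j / (√(r i) * √(c j)) * x j) ^ 2
      ≤ ∑ i, (∑ j, s i j) / r i * ∑ j, s i j * x j ^ 2 / c j :=
        sum_le_sum fun i _ => sq_sum_div_sqrt_mul_sqrt_mul_le _ _ _ (hs i) (hr i) hc
    _ ≤ ∑ i, α * ∑ j, s i j * x j ^ 2 / c j :=
        sum_le_sum fun i _ => mul_le_mul_of_nonneg_right (div_le_of_le_mul₀ (hr i) hα (hrow i))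
          (sum_nonneg fun j _ => div_nonneg (mul_nonneg (hs i j) (sq_nonneg _)) (hc j))
    _ = α * ∑ j, (∑ i, s i j) / c j * x j ^ 2 := by
        simp only [← mul_sum, sum_comm (γ := m), sum_div, sum_mul, div_mul_eq_mul_div]
    _ ≤ α * ∑ j, β * x j ^ 2 :=
        mul_le_mul_of_nonneg_left (sum_le_sum fun j _ => mul_le_mul_of_nonneg_right
          (div_le_of_le_mul₀ (hc j) hβ (hcol j)) (sq_nonneg _)) hα
    _ = α * β * ∑ j, x j ^ 2 := by rw [← mul_sum, mul_assoc]

end SchurTest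

lemma maskMatrix_nonneg {n : ℕ} {M : Matrix (Fin n) (Fin n) ℝ} (hM : ∀ i j, 0 ≤ M i j)
    (S : Finset (Fin n × Fin n)) (i j : Fin n) : 0 ≤ maskMatrix M S i j := by
  unfold maskMatrix; split_ifs
  exacts [hM i j, le_rfl]

lemma maskMatrix_le {n : ℕ} {M : Matrix (Fin n) (Fin n) ℝ} (hM : ∀ i j, 0 ≤ M i j)
    (S : Finset (Fin n × Fin n)) (i j : Fin n) : maskMatrix M S i j ≤ M i j := by
  unfold maskMatrix; split_ifs
  exacts [le_rfl, hM i j]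

lemma maskMatrix_avgOp_of_symm {n : ℕ} {B : Matrix (Fin n) (Fin n) ℝ} (hsym : ∀ i j, B i j = B j i)
    (S : Finset (Fin n × Fin n)) :
    maskMatrix (avgOp B) S =
      Matrix.of fun i j => maskMatrix B S i j / (√(∑ l, B i l) * √(∑ l, B j l)) := by
  ext i j
  simp only [maskMatrix, avgOp, Matrix.of_apply, hsym _ j]
  split_ifs <;> simp

theorem stmt17_general (n : ℕ) (B : Matrix (Fin n) (Fin n) ℝ) (S : Finset (Fin n × Fin n)) (ε : ℝ)
    (hsym : ∀ i j, B i j = B j i)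
    (hpos : ∀ i j, 0 ≤ B i j)
    (hε0 : 0 < ε)
    (hrow : ∀ i, (∑ j, maskMatrix B S i j) ≤ ε * ∑ j, B i j) :
    opNorm (maskMatrix (avgOp B) S) ≤ Real.sqrt ε := by
  have hdeg : ∀ i, 0 ≤ ∑ j, B i j := fun i => sum_nonneg fun j _ => hpos i j
  have hcol : ∀ j, ∑ i, maskMatrix B S i j ≤ 1 * ∑ i, B j i := fun j => by
    simpa only [one_mul, hsym j] using sum_le_sum fun i _ => maskMatrix_le hpos S i j
  rw [maskMatrix_avgOp_of_symm hsym, ← mul_one ε]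
  exact opNorm_le_sqrt_mul_of_sum_le _ _ _ (maskMatrix_nonneg hpos S) hdeg hdeg hε0.le zero_le_one
    hrow hcol

/-- Restriction of the Laplacian (Lemma 8.1). -/
theorem stmt17 (n : ℕ) (B : Matrix (Fin n) (Fin n) ℝ) (S : Finset (Fin n × Fin n)) (ε : ℝ)
    (hsym : ∀ i j, B i j = B j i)
    (hpos : ∀ i j, 0 ≤ B i j)
    (hε0 : 0 < ε) (hε1 : ε < 1)
    (hrow : ∀ i, (∑ j, maskMatrix B S i j) ≤ ε * ∑ j, B i j) :
    opNorm (maskMatrix (avgOp B) S) ≤ Real.sqrt ε :=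
  stmt17_general n B S ε hsym hpos hε0 hrow
end

section
/- Let Ā = (p_ij) be an n×n symmetric matrix with entries in [0,1], and let d ≥ e satisfy max_{i,j} n·p_ij ≤ d. Then for every τ > 0 and every I, J ⊆ [n] with min(|I|,|J|) ≤ n/d, the sub-matrix of the averaging operator of the regularized matrix Ā_τ = Ā + τ·1 1ᵀ satisfies ‖L(Ā_τ)_{I×J}‖ ≤ 2/√d + 2/√(n·τ). -/
open MeasureTheory ProbabilityTheory

/-! Bound the operator norm by the Frobenius norm. The row and column sums `R i`, `C j` of
`Ā_τ` are at least `n τ`, and `p_ij ≤ d / n`, so each squared entry satisfies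
`(p_ij + τ)² / (R i * C j) ≤ 2 d / (n² τ) * p_ij / C j + 2 / n²`.
Since `∑_{i ∈ I} p_ij ≤ C j`, summing over `I × J` gives at most
`2 d |J| / (n² τ) + 2 |I| |J| / n² ≤ 2 / (n τ) + 2 / d` when `|J| ≤ n / d`;
the case `|I| ≤ n / d` follows by transposing. -/

open Finset

lemma opNorm_le_sqrt_sum_sq {m k : Type*} [Fintype m] [Fintype k] [DecidableEq k]
    (B : Matrix m k ℝ) : opNorm B ≤ √(∑ i, ∑ j, B i j ^ 2) := by
  refine ContinuousLinearMap.opNorm_le_bound _ (Real.sqrt_nonneg _) fun x => ?_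
  have hcs : ∀ i, (B.mulVec x.ofLp) i ^ 2 ≤ (∑ j, B i j ^ 2) * ∑ j, x j ^ 2 := fun i =>
    sum_mul_sq_le_sq_mul_sq _ _ _
  rw [EuclideanSpace.norm_eq, EuclideanSpace.norm_eq, ← Real.sqrt_mul (by positivity)]
  refine Real.sqrt_le_sqrt ?_
  simp only [Real.norm_eq_abs, sq_abs]
  rw [sum_mul]
  exact sum_le_sum fun i _ => hcs i

lemma opNorm_submatrixSet_le {n k : ℕ} (B : Matrix (Fin n) (Fin k) ℝ) (I : Finset (Fin n))
    (J : Finset (Fin k)) :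
    opNorm (submatrixSet B I J) ≤ √(∑ i ∈ I, ∑ j ∈ J, B i j ^ 2) := by
  refine (opNorm_le_sqrt_sum_sq _).trans_eq ?_
  rw [← sum_coe_sort I]
  exact congrArg _ (sum_congr rfl fun i _ => sum_coe_sort J (fun j => B i j ^ 2))

lemma sqrt_two_div_add_two_div_le {x y : ℝ} (hx : 0 ≤ x) (hy : 0 ≤ y) :
    √(2 / x + 2 / y) ≤ 2 / √x + 2 / √y := by
  have hx2 : (2 / √x) ^ 2 = 2 * (2 / x) := by rw [div_pow, Real.sq_sqrt hx]; ring
  have hy2 : (2 / √y) ^ 2 = 2 * (2 / y) := by rw [div_pow, Real.sq_sqrt hy]; ring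
  refine Real.sqrt_le_iff.mpr ⟨by positivity, ?_⟩
  nlinarith [mul_nonneg (div_nonneg zero_le_two (Real.sqrt_nonneg x))
    (div_nonneg zero_le_two (Real.sqrt_nonneg y)), div_nonneg zero_le_two hx,
    div_nonneg zero_le_two hy]

lemma avgOp_transpose {n : ℕ} (B : Matrix (Fin n) (Fin n) ℝ) :
    avgOp B.transpose = (avgOp B).transpose := by
  ext i j
  simp only [avgOp, Matrix.transpose_apply, mul_comm]

lemma sum_sum_div_le_card {ι κ : Type*} (A : ι → κ → ℝ) (c : κ → ℝ) (I : Finset ι)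
    (J : Finset κ) (hA : ∀ i ∈ I, ∀ j ∈ J, 0 ≤ A i j)
    (hc : ∀ j ∈ J, ∑ i ∈ I, A i j ≤ c j) :
    ∑ i ∈ I, ∑ j ∈ J, A i j / c j ≤ #J := by
  rw [sum_comm, card_eq_sum_ones, Nat.cast_sum]
  refine sum_le_sum fun j hj => ?_
  rw [← sum_div, Nat.cast_one]
  exact div_le_one_of_le₀ (hc j hj) ((sum_nonneg fun i hi => hA i hi j hj).trans (hc j hj))

lemma mul_le_sum_add_const {n : ℕ} {f : Fin n → ℝ} (hf : ∀ l, 0 ≤ f l) (τ : ℝ) :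
    n * τ ≤ ∑ l, (f l + τ) := by
  rw [sum_add_distrib, sum_const, card_univ, Fintype.card_fin, nsmul_eq_mul]
  linarith [sum_nonneg fun l (_ : l ∈ univ) => hf l]

section Regularized

variable {n : ℕ} {A : Matrix (Fin n) (Fin n) ℝ} {d τ : ℝ}

lemma sq_avgOp_reg_le (hA : ∀ i j, 0 ≤ A i j) (hmax : ∀ i j, (n : ℝ) * A i j ≤ d)
    (hn : 0 < (n : ℝ)) (hτ : 0 < τ) (i j : Fin n) :
    avgOp (reg A τ) i j ^ 2 ≤
      2 * d / (n ^ 2 * τ) * (A i j / ∑ l, reg A τ l j) + 2 / n ^ 2 := by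
  set R := ∑ l, reg A τ i l
  set C := ∑ l, reg A τ l j
  have hR : n * τ ≤ R := mul_le_sum_add_const (hA i) τ
  have hC : n * τ ≤ C := mul_le_sum_add_const (fun l => hA l j) τ
  have hnτ : 0 < n * τ := by positivity
  have hRC : 0 < R * C := mul_pos (hnτ.trans_le hR) (hnτ.trans_le hC)
  have hd : 0 ≤ d := (mul_nonneg hn.le (hA i j)).trans (hmax i j)
  have hsq : A i j ^ 2 ≤ d / n * A i j := by
    have : A i j ≤ d / n := by rw [le_div_iff₀ hn]; linarith [hmax i j]
    nlinarith [hA i j]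
  have hfirst : 2 * A i j ^ 2 / (R * C) ≤ 2 * d / (n ^ 2 * τ) * (A i j / C) := by
    calc 2 * A i j ^ 2 / (R * C) ≤ 2 * (d / n * A i j) / (n * τ * C) :=
          div_le_div₀ (mul_nonneg zero_le_two (mul_nonneg (div_nonneg hd hn.le) (hA i j)))
            (by linarith) (mul_pos hnτ (hnτ.trans_le hC))
            (mul_le_mul_of_nonneg_right hR (hnτ.trans_le hC).le)
      _ = 2 * d / (n ^ 2 * τ) * (A i j / C) := by field_simp
  have hsecond : 2 * τ ^ 2 / (R * C) ≤ 2 / (n : ℝ) ^ 2 := by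
    calc 2 * τ ^ 2 / (R * C) ≤ 2 * τ ^ 2 / ((n * τ) * (n * τ)) :=
          div_le_div_of_nonneg_left (by positivity) (by positivity)
            (mul_le_mul hR hC hnτ.le (hnτ.trans_le hR).le)
      _ = 2 / (n : ℝ) ^ 2 := by field_simp
  calc avgOp (reg A τ) i j ^ 2 = (A i j + τ) ^ 2 / (R * C) := by
        rw [avgOp, div_pow, mul_pow, Real.sq_sqrt (hnτ.le.trans hR),
          Real.sq_sqrt (hnτ.le.trans hC)]
        rfl
    _ ≤ (2 * A i j ^ 2 + 2 * τ ^ 2) / (R * C) := by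
        refine div_le_div_of_nonneg_right ?_ hRC.le
        nlinarith [sq_nonneg (A i j - τ)]
    _ ≤ 2 * d / (n ^ 2 * τ) * (A i j / C) + 2 / n ^ 2 := by
        rw [add_div]; exact add_le_add hfirst hsecond

lemma sum_sq_avgOp_reg_le_of_card_right (hA : ∀ i j, 0 ≤ A i j)
    (hmax : ∀ i j, (n : ℝ) * A i j ≤ d) (hd : 0 < d) (hτ : 0 < τ) (I J : Finset (Fin n))
    (hJ : (#J : ℝ) ≤ n / d) :
    ∑ i ∈ I, ∑ j ∈ J, avgOp (reg A τ) i j ^ 2 ≤ 2 / (n * τ) + 2 / d := by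
  rcases n.eq_zero_or_pos with rfl | hn
  · simp only [eq_empty_of_isEmpty I, sum_empty]
    positivity
  have hn : 0 < (n : ℝ) := Nat.cast_pos.mpr hn
  have hI : (#I : ℝ) ≤ n := by exact_mod_cast (card_le_univ I).trans (Fintype.card_fin n).le
  have hcol : ∑ i ∈ I, ∑ j ∈ J, A i j / ∑ l, reg A τ l j ≤ #J :=
    sum_sum_div_le_card _ _ I J (fun i _ j _ => hA i j) fun j _ =>
      (sum_le_univ_sum_of_nonneg fun i => hA i j).trans
        (sum_le_sum fun l _ => le_add_of_nonneg_right hτ.le)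
  calc ∑ i ∈ I, ∑ j ∈ J, avgOp (reg A τ) i j ^ 2
      ≤ ∑ i ∈ I, ∑ j ∈ J,
          (2 * d / (n ^ 2 * τ) * (A i j / ∑ l, reg A τ l j) + 2 / n ^ 2) :=
        sum_le_sum fun i _ => sum_le_sum fun j _ => sq_avgOp_reg_le hA hmax hn hτ i j
    _ = 2 * d / (n ^ 2 * τ) * ∑ i ∈ I, ∑ j ∈ J, A i j / ∑ l, reg A τ l j
          + #I * #J * (2 / n ^ 2) := by
        simp only [sum_add_distrib, ← mul_sum, sum_const, nsmul_eq_mul]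
        ring
    _ ≤ 2 * d / (n ^ 2 * τ) * (n / d) + n * (n / d) * (2 / n ^ 2) := by
        gcongr
        exact hcol.trans hJ
    _ = 2 / (n * τ) + 2 / d := by field_simp

lemma sum_sq_avgOp_reg_le (hA : ∀ i j, 0 ≤ A i j) (hmax : ∀ i j, (n : ℝ) * A i j ≤ d)
    (hd : 0 < d) (hτ : 0 < τ) (I J : Finset (Fin n)) (hIJ : min (#I : ℝ) #J ≤ n / d) :
    ∑ i ∈ I, ∑ j ∈ J, avgOp (reg A τ) i j ^ 2 ≤ 2 / (n * τ) + 2 / d := by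
  rcases min_le_iff.mp hIJ with hI | hJ
  · have := sum_sq_avgOp_reg_le_of_card_right (A := A.transpose) (fun i j => hA j i)
      (fun i j => hmax j i) hd hτ J I hI
    rwa [sum_comm, show reg A.transpose τ = (reg A τ).transpose from rfl, avgOp_transpose]
      at this
  · exact sum_sq_avgOp_reg_le_of_card_right hA hmax hd hτ I J hJ

end Regularized

theorem stmt19_general (n : ℕ) (Abar : Matrix (Fin n) (Fin n) ℝ) (d : ℝ)
    (hrange : ∀ i j, 0 ≤ Abar i j ∧ Abar i j ≤ 1)
    (hd : Real.exp 1 ≤ d)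
    (hmax : ∀ i j, (n : ℝ) * Abar i j ≤ d) :
    ∀ τ : ℝ, 0 < τ → ∀ I J : Finset (Fin n),
      min (I.card : ℝ) (J.card : ℝ) ≤ n / d →
      opNorm (submatrixSet (avgOp (reg Abar τ)) I J) ≤
        2 / Real.sqrt d + 2 / Real.sqrt (n * τ) := by
  intro τ hτ I J hIJ
  have hd0 : 0 < d := (Real.exp_pos 1).trans_le hd
  have hsum := sum_sq_avgOp_reg_le (fun i j => (hrange i j).1) hmax hd0 hτ I J hIJ
  calc opNorm (submatrixSet (avgOp (reg Abar τ)) I J)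
      ≤ √(∑ i ∈ I, ∑ j ∈ J, avgOp (reg Abar τ) i j ^ 2) := opNorm_submatrixSet_le _ I J
    _ ≤ √(2 / (n * τ) + 2 / d) := Real.sqrt_le_sqrt hsum
    _ ≤ 2 / √d + 2 / √(n * τ) := by
        rw [add_comm (2 / √d)]
        exact sqrt_two_div_add_two_div_le (by positivity) hd0.le

/-- The regularized Laplacian of the expected matrix on the residual (Lemma 8.2). -/
theorem stmt19 (n : ℕ) (Abar : Matrix (Fin n) (Fin n) ℝ) (d : ℝ)
    (hsym : ∀ i j, Abar i j = Abar j i)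
    (hrange : ∀ i j, 0 ≤ Abar i j ∧ Abar i j ≤ 1)
    (hd : Real.exp 1 ≤ d)
    (hmax : ∀ i j, (n : ℝ) * Abar i j ≤ d) :
    ∀ τ : ℝ, 0 < τ → ∀ I J : Finset (Fin n),
      min (I.card : ℝ) (J.card : ℝ) ≤ n / d →
      opNorm (submatrixSet (avgOp (reg Abar τ)) I J) ≤
        2 / Real.sqrt d + 2 / Real.sqrt (n * τ) :=
  stmt19_general n Abar d hrange hd hmax
end
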